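/- arXiv:2002.01347 — 6 statements merged into one kernel-verified Lean document; each statement's English description precedes it below -/
import Mathlib

section
/- For a connected graph G, γ_tR(G) = 5 if and only if γ_t(G) = 3 and there exist a minimum dominating set S and a minimum total dominating set T with S ⊂ T (proper subset). -/
open SimpleGraph Finset

variable {V : Type*}

/-- `S` is a dominating set of `G`. -/
def Dominating (G : SimpleGraph V) (S : Finset V) : Prop :=
  ∀ v, v ∉ S → ∃ u ∈ S, G.Adj u v

/-- `S` is a total dominating set of `G`. -/
def TotalDominating (G : SimpleGraph V) (S : Finset V) : Prop :=
  ∀ v : V, ∃ u ∈ S, G.Adj u v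

/-- The domination number γ(G). -/
noncomputable def gamma (G : SimpleGraph V) [Fintype V] : ℕ :=
  sInf {n | ∃ S : Finset V, Dominating G S ∧ S.card = n}

/-- The total domination number γ_t(G). -/
noncomputable def gammaT (G : SimpleGraph V) [Fintype V] : ℕ :=
  sInf {n | ∃ S : Finset V, TotalDominating G S ∧ S.card = n}

/-- `f` is a total Roman dominating function on `G`. -/
def IsTRDF (G : SimpleGraph V) (f : V → ℕ) : Prop :=
  (∀ v, f v ≤ 2) ∧ (∀ v, f v = 0 → ∃ u, G.Adj u v ∧ f u = 2) ∧
    (∀ v, 0 < f v → ∃ u, G.Adj u v ∧ 0 < f u)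

/-- The total Roman domination number γ_tR(G). -/
noncomputable def gammaTR (G : SimpleGraph V) [Fintype V] : ℕ :=
  sInf {n | ∃ f : V → ℕ, IsTRDF G f ∧ ∑ v, f v = n}

/-- The graph `G + uv`. -/
def addEdge (G : SimpleGraph V) (u v : V) : SimpleGraph V :=
  G ⊔ SimpleGraph.fromEdgeSet {s(u, v)}

/-- The graph `G - uv`. -/
def deleteEdge (G : SimpleGraph V) (u v : V) : SimpleGraph V :=
  G.deleteEdges {s(u, v)}

/-- `G` has no isolated vertices. -/
def NoIsolated (G : SimpleGraph V) : Prop := ∀ v : V, ∃ u, G.Adj u v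

/-- The degree of `v` in `G`. -/
noncomputable def degreeN (G : SimpleGraph V) (v : V) : ℕ :=
  {u | G.Adj v u}.ncard

set_option linter.unusedSectionVars false
set_option maxHeartbeats 1000000

section Basic
variable {G : SimpleGraph V} [Fintype V]

lemma gammaTR_le_of (f : V → ℕ) (hf : IsTRDF G f) : gammaTR G ≤ ∑ v, f v :=
  Nat.sInf_le ⟨f, hf, rfl⟩

lemma gammaT_le_of (T : Finset V) (h : TotalDominating G T) : gammaT G ≤ T.card :=
  Nat.sInf_le ⟨T, h, rfl⟩

lemma gamma_le_of (S : Finset V) (h : Dominating G S) : gamma G ≤ S.card :=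
  Nat.sInf_le ⟨S, h, rfl⟩

end Basic

section GFun
variable {G : SimpleGraph V} [Fintype V] [DecidableEq V]

/-- The function taking value 2 on `A`, 1 on `B`, 0 elsewhere. -/
def gfun (A B : Finset V) (v : V) : ℕ := if v ∈ A then 2 else if v ∈ B then 1 else 0

lemma sum_gfun (A B : Finset V) (hd : ∀ v ∈ B, v ∉ A) :
    ∑ v, gfun A B v = 2 * A.card + B.card := by
  have : ∀ v : V, gfun A B v = (if v ∈ A then 2 else 0) + (if v ∈ B then 1 else 0) := by
    intro v
    by_cases hA : v ∈ A
    · have hB : v ∉ B := fun hB => hd v hB hA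
      simp [gfun, hA, hB]
    · by_cases hB : v ∈ B <;> simp [gfun, hA, hB]
  rw [Finset.sum_congr rfl (fun v _ => this v), Finset.sum_add_distrib]
  rw [Finset.sum_ite_mem, Finset.sum_ite_mem, Finset.univ_inter, Finset.univ_inter]
  simp [Finset.sum_const, mul_comm]

lemma gfun_isTRDF (A B : Finset V)
    (h0 : ∀ v, v ∉ A → v ∉ B → ∃ u ∈ A, G.Adj u v)
    (h1 : ∀ v, v ∈ A ∨ v ∈ B → ∃ u, G.Adj u v ∧ (u ∈ A ∨ u ∈ B)) :
    IsTRDF G (gfun A B) := by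
  refine ⟨fun v => by unfold gfun; split <;> [omega; (split <;> omega)], ?_, ?_⟩
  · intro v hv
    have hA : v ∉ A := by intro h; simp [gfun, h] at hv
    have hB : v ∉ B := by intro h; by_cases h' : v ∈ A <;> simp [gfun, h, h'] at hv
    obtain ⟨u, hu, hadj⟩ := h0 v hA hB
    exact ⟨u, hadj, by simp [gfun, hu]⟩
  · intro v hv
    have hv' : v ∈ A ∨ v ∈ B := by
      by_contra h
      push_neg at h
      simp [gfun, h.1, h.2] at hv
    obtain ⟨u, hadj, hu⟩ := h1 v hv'
    refine ⟨u, hadj, ?_⟩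
    rcases hu with h | h
    · simp [gfun, h]
    · by_cases h' : u ∈ A <;> simp [gfun, h, h']

lemma tds_ge3 (hmin : ∀ g : V → ℕ, IsTRDF G g → 5 ≤ ∑ v, g v)
    (W : Finset V) (hW : TotalDominating G W) : 3 ≤ W.card := by
  by_contra h
  push_neg at h
  have htr : IsTRDF G (gfun W ∅) := by
    refine gfun_isTRDF W ∅ (fun v _ _ => hW v) (fun v _ => ?_)
    obtain ⟨u, hu, hadj⟩ := hW v
    exact ⟨u, hadj, Or.inl hu⟩
  have := hmin _ htr
  rw [sum_gfun W ∅ (by simp)] at this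
  simp at this
  omega

lemma dom1_false (hmin : ∀ g : V → ℕ, IsTRDF G g → 5 ≤ ∑ v, g v)
    (p q : V) (hpq : G.Adj p q) (hdom : ∀ v, v ≠ p → G.Adj p v) : False := by
  have hqp : q ≠ p := fun h => G.irrefl (h ▸ hpq)
  have htr : IsTRDF G (gfun {p} {q}) := by
    refine gfun_isTRDF {p} {q} (fun v hv _ => ⟨p, by simp, hdom v (by simpa using hv)⟩) ?_
    intro v hv
    rcases hv with h | h
    · simp at h; subst h; exact ⟨q, hpq.symm, Or.inr (by simp)⟩
    · simp at h; subst h; exact ⟨p, hpq, Or.inl (by simp)⟩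
  have := hmin _ htr
  rw [sum_gfun _ _ (by simpa using hqp)] at this
  simp at this

end GFun

section Decomp
variable {G : SimpleGraph V} [Fintype V] [DecidableEq V] (f : V → ℕ)

def Vone : Finset V := Finset.univ.filter (fun v => f v = 1)
def Vtwo : Finset V := Finset.univ.filter (fun v => f v = 2)

lemma sum_decomp (hle : ∀ v, f v ≤ 2) :
    ∑ v, f v = (Vone f).card + 2 * (Vtwo f).card := by
  have h1 : (Vone f).card = ∑ v : V, (if f v = 1 then 1 else 0) := by
    rw [Vone, Finset.card_filter]
  have h2 : (Vtwo f).card = ∑ v : V, (if f v = 2 then 1 else 0) := by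
    rw [Vtwo, Finset.card_filter]
  rw [h1, h2, Finset.mul_sum, ← Finset.sum_add_distrib]
  refine Finset.sum_congr rfl fun v _ => ?_
  have := hle v
  interval_cases h : f v <;> simp

lemma mem_Vone {v : V} : v ∈ Vone f ↔ f v = 1 := by simp [Vone]
lemma mem_Vtwo {v : V} : v ∈ Vtwo f ↔ f v = 2 := by simp [Vtwo]

lemma pos_tds (hf : IsTRDF G f) : TotalDominating G (Vone f ∪ Vtwo f) := by
  intro v
  rcases Nat.eq_zero_or_pos (f v) with h | h
  · obtain ⟨u, hadj, hu⟩ := hf.2.1 v h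
    exact ⟨u, by simp [mem_Vone, mem_Vtwo, hu], hadj⟩
  · obtain ⟨u, hadj, hu⟩ := hf.2.2 v h
    have := hf.1 u
    refine ⟨u, ?_, hadj⟩
    simp only [Finset.mem_union, mem_Vone, mem_Vtwo]
    omega

lemma pos_card : (Vone f ∪ Vtwo f).card = (Vone f).card + (Vtwo f).card := by
  rw [Finset.card_union_of_disjoint]
  rw [Finset.disjoint_left]
  intro a h1 h2
  rw [mem_Vone] at h1; rw [mem_Vtwo] at h2; omega

end Decomp

section Assemble
variable {G : SimpleGraph V} [Fintype V] [DecidableEq V]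

lemma assemble (hmin : ∀ g : V → ℕ, IsTRDF G g → 5 ≤ ∑ v, g v)
    (hiso : NoIsolated G)
    (S T : Finset V) (hS : Dominating G S) (hT : TotalDominating G T)
    (hS2 : S.card = 2) (hT3 : T.card = 3) (hST : S ⊆ T) :
    gammaT G = 3 ∧ ∃ S' T' : Finset V, Dominating G S' ∧ S'.card = gamma G ∧
      TotalDominating G T' ∧ T'.card = gammaT G ∧ S' ⊂ T' := by
  have hne : S.Nonempty := Finset.card_pos.mp (by omega)
  obtain ⟨v0, -⟩ := hne
  have hγt : gammaT G = 3 := by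
    refine le_antisymm (hT3 ▸ gammaT_le_of T hT) ?_
    refine le_csInf ⟨3, T, hT, hT3⟩ ?_
    rintro n ⟨W, hW, rfl⟩
    exact tds_ge3 hmin W hW
  have hγ : gamma G = 2 := by
    refine le_antisymm (hS2 ▸ gamma_le_of S hS) ?_
    refine le_csInf ⟨2, S, hS, hS2⟩ ?_
    rintro n ⟨W, hW, rfl⟩
    by_contra h
    push_neg at h
    interval_cases hc : W.card
    · rw [Finset.card_eq_zero] at hc
      subst hc
      obtain ⟨u, hu, -⟩ := hW v0 (by simp)
      simp at hu
    · obtain ⟨p, hp⟩ := Finset.card_eq_one.mp hc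
      subst hp
      obtain ⟨q, hq⟩ := hiso p
      refine dom1_false hmin p q hq.symm fun v hv => ?_
      obtain ⟨u, hu, hadj⟩ := hW v (by simpa using hv)
      simp at hu
      subst hu
      exact hadj
  refine ⟨hγt, S, T, hS, by omega, hT, by omega, ?_⟩
  exact Finset.ssubset_iff_subset_ne.mpr ⟨hST, fun h => by rw [h] at hS2; omega⟩
end Assemble
section P1
variable {G : SimpleGraph V} [Fintype V] [DecidableEq V]

lemma card2' {p q : V} (h : p ≠ q) : ({p, q} : Finset V).card = 2 := Finset.card_pair h

lemma card3' {p q r : V} (h1 : p ≠ q) (h2 : p ≠ r) (h3 : q ≠ r) :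
    ({p, q, r} : Finset V).card = 3 := by
  rw [Finset.card_insert_of_notMem (by simp [h1, h2]), Finset.card_pair h3]

/-- Case |V₂| = 2 of the forward direction. -/
lemma caseA2 (f : V → ℕ) (hf : IsTRDF G f) (p q x : V)
    (hpq : p ≠ q) (hcls : ∀ v, 0 < f v → v = p ∨ v = q ∨ v = x)
    (h2 : ∀ v, f v = 2 → v = p ∨ v = q) (hfp : f p = 2) (hfq : f q = 2) (hfx : f x = 1) :
    ∃ S T : Finset V, Dominating G S ∧ S.card = 2 ∧ TotalDominating G T ∧
      T.card = 3 ∧ S ⊆ T := by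
  have hxp : x ≠ p := fun h => by rw [h] at hfx; omega
  have hxq : x ≠ q := fun h => by rw [h] at hfx; omega
  refine ⟨{p, q}, {p, q, x}, ?_, card2' hpq, ?_, ?_, by intro t ht; simp at ht ⊢; tauto⟩
  · intro v hv
    simp only [Finset.mem_insert, Finset.mem_singleton, not_or] at hv
    rcases Nat.eq_zero_or_pos (f v) with h | h
    · obtain ⟨u, hadj, hu⟩ := hf.2.1 v h
      rcases h2 u hu with rfl | rfl <;> exact ⟨u, by simp, hadj⟩
    · have hvx : v = x := by rcases hcls v h with rfl | rfl | rfl <;> tauto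
      obtain ⟨u, hadj, hu⟩ := hf.2.2 v h
      have hux : u ≠ v := G.ne_of_adj hadj
      rcases hcls u hu with rfl | rfl | rfl
      · exact ⟨u, by simp, hadj⟩
      · exact ⟨u, by simp, hadj⟩
      · exact absurd hvx.symm hux
  · intro v
    rcases Nat.eq_zero_or_pos (f v) with h | h
    · obtain ⟨u, hadj, hu⟩ := hf.2.1 v h
      rcases h2 u hu with rfl | rfl <;> exact ⟨u, by simp, hadj⟩
    · obtain ⟨u, hadj, hu⟩ := hf.2.2 v h
      rcases hcls u hu with rfl | rfl | rfl <;> exact ⟨u, by simp, hadj⟩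
  · rw [card3' hpq (hxp.symm) (hxq.symm)]

end P1

section P2
variable {G : SimpleGraph V} [Fintype V] [DecidableEq V]

/-- Case |V₂| = 1 of the forward direction (after symmetry reduction). -/
lemma caseA1 (hconn : G.Connected) (f : V → ℕ) (hf : IsTRDF G f)
    (u x a b : V)
    (hux_ne : u ≠ x) (hab : a ≠ b) (hax : a ≠ x) (hbx : b ≠ x) (hau : a ≠ u) (hbu : b ≠ u)
    (hux : G.Adj u x)
    (hdom : ∀ v, v ≠ u → v ≠ x → v ≠ a → v ≠ b → G.Adj u v)
    (hcls : ∀ v, 0 < f v → v = u ∨ v = x ∨ v = a ∨ v = b)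
    (hfb : f b = 1)
    (hub : ¬ G.Adj u b) (hxb : ¬ G.Adj x b) :
    ∃ S T : Finset V, Dominating G S ∧ S.card = 2 ∧ TotalDominating G T ∧
      T.card = 3 ∧ S ⊆ T := by
  obtain ⟨w, hw, hwpos⟩ := hf.2.2 b (by omega)
  have hwb : w ≠ b := G.ne_of_adj hw
  have hba : G.Adj a b := by
    rcases hcls w hwpos with rfl | rfl | rfl | rfl
    · exact absurd hw hub
    · exact absurd hw hxb
    · exact hw
    · exact absurd rfl hwb
  by_cases hya : G.Adj u a ∨ G.Adj x a
  · refine ⟨{u, a}, {u, x, a}, ?_, card2' (Ne.symm hau), ?_,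
      card3' hux_ne (Ne.symm hau) (Ne.symm hax), ?_⟩
    · intro v hv
      simp only [Finset.mem_insert, Finset.mem_singleton, not_or] at hv
      by_cases h1 : v = x
      · subst h1; exact ⟨u, by simp, hux⟩
      by_cases h2 : v = b
      · subst h2; exact ⟨a, by simp, hba⟩
      exact ⟨u, by simp, hdom v hv.1 h1 hv.2 h2⟩
    · intro v
      by_cases h1 : v = u
      · subst h1; exact ⟨x, by simp, hux.symm⟩
      by_cases h2 : v = x
      · subst h2; exact ⟨u, by simp, hux⟩
      by_cases h3 : v = a
      · subst h3
        rcases hya with h | h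
        · exact ⟨u, by simp, h⟩
        · exact ⟨x, by simp, h⟩
      by_cases h4 : v = b
      · subst h4; exact ⟨a, by simp, hba⟩
      · exact ⟨u, by simp, hdom v h1 h2 h3 h4⟩
    · intro t ht; simp at ht ⊢; tauto
  · push_neg at hya
    obtain ⟨p⟩ := hconn.preconnected a u
    obtain ⟨d, -, hd1, hd2⟩ := p.exists_boundary_dart {a, b} (by simp)
      (by simp [Ne.symm hau, Ne.symm hbu])
    have hadj0 : G.Adj d.fst d.snd := d.adj
    have hw0a : d.snd ≠ a := by intro h; exact hd2 (by simp [h])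
    have hw0b : d.snd ≠ b := by intro h; exact hd2 (by simp [h])
    rcases (show d.fst = a ∨ d.fst = b by simpa using hd1) with hfst | hfst
    · have haw : G.Adj a d.snd := hfst ▸ hadj0
      have hw0u : d.snd ≠ u := fun h => hya.1 (by rw [h] at haw; exact haw.symm)
      have hw0x : d.snd ≠ x := fun h => hya.2 (by rw [h] at haw; exact haw.symm)
      have huw : G.Adj u d.snd := hdom d.snd hw0u hw0x hw0a hw0b
      refine ⟨{u, a}, {u, d.snd, a}, ?_, card2' (Ne.symm hau), ?_,
        card3' (Ne.symm hw0u) (Ne.symm hau) hw0a, ?_⟩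
      · intro v hv
        simp only [Finset.mem_insert, Finset.mem_singleton, not_or] at hv
        by_cases h1 : v = x
        · subst h1; exact ⟨u, by simp, hux⟩
        by_cases h2 : v = b
        · subst h2; exact ⟨a, by simp, hba⟩
        exact ⟨u, by simp, hdom v hv.1 h1 hv.2 h2⟩
      · intro v
        by_cases h1 : v = u
        · subst h1; exact ⟨d.snd, by simp, huw.symm⟩
        by_cases h2 : v = d.snd
        · subst h2; exact ⟨u, by simp, huw⟩
        by_cases h3 : v = a
        · subst h3; exact ⟨d.snd, by simp, haw.symm⟩
        by_cases h4 : v = x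
        · subst h4; exact ⟨u, by simp, hux⟩
        by_cases h5 : v = b
        · subst h5; exact ⟨a, by simp, hba⟩
        · exact ⟨u, by simp, hdom v h1 h4 h3 h5⟩
      · intro t ht; simp at ht ⊢; tauto
    · have hbw : G.Adj b d.snd := hfst ▸ hadj0
      have hw0u : d.snd ≠ u := fun h => hub (by rw [h] at hbw; exact hbw.symm)
      have hw0x : d.snd ≠ x := fun h => hxb (by rw [h] at hbw; exact hbw.symm)
      have huw : G.Adj u d.snd := hdom d.snd hw0u hw0x hw0a hw0b
      refine ⟨{u, b}, {u, d.snd, b}, ?_, card2' (Ne.symm hbu), ?_,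
        card3' (Ne.symm hw0u) (Ne.symm hbu) hw0b, ?_⟩
      · intro v hv
        simp only [Finset.mem_insert, Finset.mem_singleton, not_or] at hv
        by_cases h1 : v = x
        · subst h1; exact ⟨u, by simp, hux⟩
        by_cases h2 : v = a
        · subst h2; exact ⟨b, by simp, hba.symm⟩
        exact ⟨u, by simp, hdom v hv.1 h1 h2 hv.2⟩
      · intro v
        by_cases h1 : v = u
        · subst h1; exact ⟨d.snd, by simp, huw.symm⟩
        by_cases h2 : v = d.snd
        · subst h2; exact ⟨u, by simp, huw⟩
        by_cases h3 : v = b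
        · subst h3; exact ⟨d.snd, by simp, hbw.symm⟩
        by_cases h4 : v = x
        · subst h4; exact ⟨u, by simp, hux⟩
        by_cases h5 : v = a
        · subst h5; exact ⟨b, by simp, hba.symm⟩
        · exact ⟨u, by simp, hdom v h1 h4 h5 h3⟩
      · intro t ht; simp at ht ⊢; tauto
end P2

section P3
variable {G : SimpleGraph V} [Fintype V] [DecidableEq V]

lemma keyC1 (v a' b' c' w : V) (hva : G.Adj v a') (hvb : G.Adj v b') (hvc : G.Adj v c')
    (haw : G.Adj a' w) (henum : ∀ t, t ≠ v → t ≠ a' → t ≠ b' → t ≠ c' → t = w)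
    (hwv : w ≠ v) (hwa : w ≠ a') :
    ∃ S T : Finset V, Dominating G S ∧ S.card = 2 ∧ TotalDominating G T ∧
      T.card = 3 ∧ S ⊆ T := by
  have hva' : v ≠ a' := G.ne_of_adj hva
  refine ⟨{v, a'}, {v, a', w}, ?_, card2' hva', ?_,
    card3' hva' (Ne.symm hwv) (Ne.symm hwa), by intro t ht; simp at ht ⊢; tauto⟩
  · intro t ht
    simp only [Finset.mem_insert, Finset.mem_singleton, not_or] at ht
    by_cases h1 : t = b'
    · subst h1; exact ⟨v, by simp, hvb⟩
    by_cases h2 : t = c'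
    · subst h2; exact ⟨v, by simp, hvc⟩
    · have := henum t ht.1 ht.2 h1 h2
      subst this; exact ⟨a', by simp, haw⟩
  · intro t
    by_cases h0 : t = v
    · subst h0; exact ⟨a', by simp, hva.symm⟩
    by_cases h1 : t = a'
    · subst h1; exact ⟨v, by simp, hva⟩
    by_cases h2 : t = b'
    · subst h2; exact ⟨v, by simp, hvb⟩
    by_cases h3 : t = c'
    · subst h3; exact ⟨v, by simp, hvc⟩
    · have := henum t h0 h1 h2 h3
      subst this; exact ⟨a', by simp, haw⟩

lemma keyC2 (hiso : ∀ t : V, ∃ s, G.Adj s t) (a b c d e : V)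
    (hac : a ≠ c) (hba : G.Adj b a) (hbc : G.Adj b c)
    (hbfull : ∀ t, G.Adj b t → t = a ∨ t = c)
    (hda : d ≠ a) (hdb : d ≠ b) (hdc : d ≠ c)
    (hea : e ≠ a) (heb : e ≠ b) (hec : e ≠ c) (hde : d ≠ e)
    (henum : ∀ t, t ≠ a → t ≠ b → t ≠ c → t = d ∨ t = e)
    (hd1 : G.Adj a d ∨ G.Adj c d) (hnae : ¬ G.Adj a e) (hnce : ¬ G.Adj c e) :
    ∃ S T : Finset V, Dominating G S ∧ S.card = 2 ∧ TotalDominating G T ∧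
      T.card = 3 ∧ S ⊆ T := by
  have hab' : a ≠ b := (G.ne_of_adj hba).symm
  have hcb' : c ≠ b := (G.ne_of_adj hbc).symm
  obtain ⟨t, ht⟩ := hiso e
  have hte : t ≠ e := G.ne_of_adj ht
  have htd : t = d := by
    by_cases h1 : t = a
    · exact absurd (h1 ▸ ht) hnae
    by_cases h2 : t = b
    · rcases hbfull e (h2 ▸ ht) with h | h
      · exact absurd h hea
      · exact absurd h hec
    by_cases h3 : t = c
    · exact absurd (h3 ▸ ht) hnce
    rcases henum t h1 h2 h3 with h | h
    · exact h
    · exact absurd h hte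
  have hdee : G.Adj d e := htd ▸ ht
  have hSdom : Dominating G {b, d} := by
    intro t ht'
    simp only [Finset.mem_insert, Finset.mem_singleton, not_or] at ht'
    by_cases h1 : t = a
    · subst h1; exact ⟨b, by simp, hba⟩
    by_cases h3 : t = c
    · subst h3; exact ⟨b, by simp, hbc⟩
    rcases henum t h1 ht'.1 h3 with h | h
    · exact absurd h ht'.2
    · subst h; exact ⟨d, by simp, hdee⟩
  rcases hd1 with had | hcd
  · refine ⟨{b, d}, {a, b, d}, hSdom, card2' (Ne.symm hdb), ?_,
      card3' hab' (Ne.symm hda) (Ne.symm hdb), by intro t ht'; simp at ht' ⊢; tauto⟩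
    intro t
    by_cases h1 : t = a
    · subst h1; exact ⟨b, by simp, hba⟩
    by_cases h2 : t = b
    · subst h2; exact ⟨a, by simp, hba.symm⟩
    by_cases h3 : t = c
    · subst h3; exact ⟨b, by simp, hbc⟩
    rcases henum t h1 h2 h3 with h | h
    · subst h; exact ⟨a, by simp, had⟩
    · subst h; exact ⟨d, by simp, hdee⟩
  · refine ⟨{b, d}, {b, c, d}, hSdom, card2' (Ne.symm hdb), ?_,
      card3' (Ne.symm hcb') (Ne.symm hdb) (Ne.symm hdc), by intro t ht'; simp at ht' ⊢; tauto⟩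
    intro t
    by_cases h1 : t = a
    · subst h1; exact ⟨b, by simp, hba⟩
    by_cases h2 : t = b
    · subst h2; exact ⟨c, by simp, hbc.symm⟩
    by_cases h3 : t = c
    · subst h3; exact ⟨b, by simp, hbc⟩
    rcases henum t h1 h2 h3 with h | h
    · subst h; exact ⟨c, by simp, hcd⟩
    · subst h; exact ⟨d, by simp, hdee⟩
end P3

section P4
variable {G : SimpleGraph V} [Fintype V] [DecidableEq V]

lemma caseA0 (hconn : G.Connected) (hiso : ∀ t : V, ∃ s, G.Adj s t)
    (hcard : Fintype.card V = 5)
    (hdom1 : ∀ (p q : V), G.Adj p q → (∀ v, v ≠ p → G.Adj p v) → False) :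
    ∃ S T : Finset V, Dominating G S ∧ S.card = 2 ∧ TotalDominating G T ∧
      T.card = 3 ∧ S ⊆ T := by
  have hne : Nonempty V := Fintype.card_pos_iff.mp (by omega)
  by_cases hdeg : ∃ v t1 t2 t3 : V, t1 ≠ t2 ∧ t1 ≠ t3 ∧ t2 ≠ t3 ∧
      G.Adj v t1 ∧ G.Adj v t2 ∧ G.Adj v t3
  · obtain ⟨v, a, b, c, hab, hac, hbc, hva, hvb, hvc⟩ := hdeg
    have hvna : v ≠ a := G.ne_of_adj hva
    have hvnb : v ≠ b := G.ne_of_adj hvb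
    have hvnc : v ≠ c := G.ne_of_adj hvc
    have hsub : ({v, a, b, c} : Finset V).card = 4 := by
      rw [Finset.card_insert_of_notMem (by simp [hvna, hvnb, hvnc]),
        Finset.card_insert_of_notMem (by simp [hab, hac]), Finset.card_pair hbc]
    have hD : (Finset.univ \ {v, a, b, c} : Finset V).card = 1 := by
      rw [Finset.card_sdiff_of_subset (Finset.subset_univ _), Finset.card_univ, hcard, hsub]
    obtain ⟨w, hw⟩ := Finset.card_eq_one.mp hD
    have hwmem : w ∈ Finset.univ \ ({v, a, b, c} : Finset V) := by
      rw [hw]; exact Finset.mem_singleton_self w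
    simp only [Finset.mem_sdiff, Finset.mem_univ, true_and, Finset.mem_insert,
      Finset.mem_singleton, not_or] at hwmem
    have henum : ∀ t : V, t ≠ v → t ≠ a → t ≠ b → t ≠ c → t = w := by
      intro t h1 h2 h3 h4
      have ht : t ∈ Finset.univ \ ({v, a, b, c} : Finset V) := by simp [h1, h2, h3, h4]
      rw [hw] at ht; simpa using ht
    by_cases hvw : G.Adj v w
    · exfalso
      refine hdom1 v a hva ?_
      intro t ht
      by_cases h2 : t = a
      · subst h2; exact hva
      by_cases h3 : t = b
      · subst h3; exact hvb
      by_cases h4 : t = c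
      · subst h4; exact hvc
      · rw [henum t ht h2 h3 h4]; exact hvw
    · obtain ⟨t, ht⟩ := hiso w
      have htw : t ≠ w := G.ne_of_adj ht
      have htv : t ≠ v := fun h => hvw (h ▸ ht)
      by_cases h1 : t = a
      · exact keyC1 v a b c w hva hvb hvc (h1 ▸ ht) henum
          hwmem.1 hwmem.2.1
      by_cases h2 : t = b
      · exact keyC1 v b a c w hvb hva hvc (h2 ▸ ht)
          (fun t u1 u2 u3 u4 => henum t u1 u3 u2 u4)
          hwmem.1 hwmem.2.2.1
      by_cases h3 : t = c
      · exact keyC1 v c a b w hvc hva hvb (h3 ▸ ht)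
          (fun t u1 u2 u3 u4 => henum t u1 u3 u4 u2)
          hwmem.1 hwmem.2.2.2
      · exact absurd (henum t htv h1 h2 h3) htw
  · have hmax : ∀ p t1 t2 t3 : V, G.Adj p t1 → G.Adj p t2 → G.Adj p t3 →
        (t1 = t2 ∨ t1 = t3 ∨ t2 = t3) := by
      intro p t1 t2 t3 h1 h2 h3
      by_contra hcon
      push_neg at hcon
      exact hdeg ⟨p, t1, t2, t3, hcon.1, hcon.2.1, hcon.2.2, h1, h2, h3⟩
    have step1 : ∃ b a c : V, a ≠ c ∧ G.Adj b a ∧ G.Adj b c := by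
      by_contra hstep
      push_neg at hstep
      have hdeg1 : ∀ p s t : V, G.Adj p s → G.Adj p t → s = t := by
        intro p s t h1 h2
        by_contra hne'
        exact hstep p s t hne' h1 h2
      obtain ⟨v0⟩ := hne
      obtain ⟨t0, ht0⟩ := hiso v0
      have hEcard : (Finset.univ \ {v0, t0} : Finset V).Nonempty := by
        rw [← Finset.card_pos, Finset.card_sdiff_of_subset (Finset.subset_univ _),
          Finset.card_univ, hcard]
        have h2 : ({v0, t0} : Finset V).card ≤ 2 :=
          le_trans (Finset.card_insert_le _ _) (by simp)
        omega
      obtain ⟨s, hs⟩ := hEcard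
      simp only [Finset.mem_sdiff, Finset.mem_univ, true_and, Finset.mem_insert,
        Finset.mem_singleton, not_or] at hs
      obtain ⟨p⟩ := hconn.preconnected v0 s
      obtain ⟨d, -, hd1, hd2⟩ := p.exists_boundary_dart {v0, t0} (by simp)
        (by simp [hs.1, hs.2])
      have hadj0 : G.Adj d.fst d.snd := d.adj
      rcases (show d.fst = v0 ∨ d.fst = t0 by simpa using hd1) with h | h
      · have : d.snd = t0 := hdeg1 v0 d.snd t0 (h ▸ hadj0) ht0.symm
        exact hd2 (by simp [this])
      · have : d.snd = v0 := hdeg1 t0 d.snd v0 (h ▸ hadj0) ht0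
        exact hd2 (by simp [this])
    obtain ⟨b, a, c, hac, hba, hbc⟩ := step1
    have hab' : a ≠ b := (G.ne_of_adj hba).symm
    have hcb' : c ≠ b := (G.ne_of_adj hbc).symm
    have hbfull : ∀ t, G.Adj b t → t = a ∨ t = c := by
      intro t ht
      rcases hmax b a c t hba hbc ht with h | h | h
      · exact absurd h hac
      · exact Or.inl h.symm
      · exact Or.inr h.symm
    have hDc : (Finset.univ \ {a, b, c} : Finset V).card = 2 := by
      rw [Finset.card_sdiff_of_subset (Finset.subset_univ _), Finset.card_univ, hcard,
        card3' hab' hac (Ne.symm hcb')]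
    obtain ⟨d, e, hde, hD⟩ := Finset.card_eq_two.mp hDc
    have hdmem : d ∈ Finset.univ \ ({a, b, c} : Finset V) := by rw [hD]; simp
    have hemem : e ∈ Finset.univ \ ({a, b, c} : Finset V) := by rw [hD]; simp
    simp only [Finset.mem_sdiff, Finset.mem_univ, true_and, Finset.mem_insert,
      Finset.mem_singleton, not_or] at hdmem hemem
    have henum : ∀ t : V, t ≠ a → t ≠ b → t ≠ c → (t = d ∨ t = e) := by
      intro t h1 h2 h3
      have ht : t ∈ Finset.univ \ ({a, b, c} : Finset V) := by simp [h1, h2, h3]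
      rw [hD] at ht; simpa using ht
    by_cases hd1 : G.Adj a d ∨ G.Adj c d
    · by_cases he1 : G.Adj a e ∨ G.Adj c e
      · have hTDS : TotalDominating G {a, b, c} := by
          intro t
          by_cases h1 : t = a
          · subst h1; exact ⟨b, by simp, hba⟩
          by_cases h2 : t = b
          · subst h2; exact ⟨a, by simp, hba.symm⟩
          by_cases h3 : t = c
          · subst h3; exact ⟨b, by simp, hbc⟩
          rcases henum t h1 h2 h3 with rfl | rfl
          · rcases hd1 with h | h
            · exact ⟨a, by simp, h⟩
            · exact ⟨c, by simp, h⟩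
          · rcases he1 with h | h
            · exact ⟨a, by simp, h⟩
            · exact ⟨c, by simp, h⟩
        have hT3 : ({a, b, c} : Finset V).card = 3 := card3' hab' hac (Ne.symm hcb')
        rcases hd1 with had | hcd <;> rcases he1 with hae | hce
        · refine ⟨{a, b}, {a, b, c}, ?_, card2' hab', hTDS, hT3,
            by intro t ht'; simp at ht' ⊢; tauto⟩
          intro t ht'
          simp only [Finset.mem_insert, Finset.mem_singleton, not_or] at ht'
          by_cases h3 : t = c
          · subst h3; exact ⟨b, by simp, hbc⟩
          rcases henum t ht'.1 ht'.2 h3 with rfl | rfl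
          · exact ⟨a, by simp, had⟩
          · exact ⟨a, by simp, hae⟩
        · refine ⟨{a, c}, {a, b, c}, ?_, card2' hac, hTDS, hT3,
            by intro t ht'; simp at ht' ⊢; tauto⟩
          intro t ht'
          simp only [Finset.mem_insert, Finset.mem_singleton, not_or] at ht'
          by_cases h2 : t = b
          · subst h2; exact ⟨a, by simp, hba.symm⟩
          rcases henum t ht'.1 h2 ht'.2 with rfl | rfl
          · exact ⟨a, by simp, had⟩
          · exact ⟨c, by simp, hce⟩
        · refine ⟨{a, c}, {a, b, c}, ?_, card2' hac, hTDS, hT3,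
            by intro t ht'; simp at ht' ⊢; tauto⟩
          intro t ht'
          simp only [Finset.mem_insert, Finset.mem_singleton, not_or] at ht'
          by_cases h2 : t = b
          · subst h2; exact ⟨a, by simp, hba.symm⟩
          rcases henum t ht'.1 h2 ht'.2 with rfl | rfl
          · exact ⟨c, by simp, hcd⟩
          · exact ⟨a, by simp, hae⟩
        · refine ⟨{b, c}, {a, b, c}, ?_, card2' (Ne.symm hcb'), hTDS, hT3,
            by intro t ht'; simp at ht' ⊢; tauto⟩
          intro t ht'
          simp only [Finset.mem_insert, Finset.mem_singleton, not_or] at ht'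
          by_cases h1 : t = a
          · subst h1; exact ⟨b, by simp, hba⟩
          rcases henum t h1 ht'.1 ht'.2 with rfl | rfl
          · exact ⟨c, by simp, hcd⟩
          · exact ⟨c, by simp, hce⟩
      · push_neg at he1
        exact keyC2 hiso a b c d e hac hba hbc hbfull hdmem.1 hdmem.2.1 hdmem.2.2
          hemem.1 hemem.2.1 hemem.2.2 hde henum hd1 he1.1 he1.2
    · by_cases he1 : G.Adj a e ∨ G.Adj c e
      · push_neg at hd1
        exact keyC2 hiso a b c e d hac hba hbc hbfull hemem.1 hemem.2.1 hemem.2.2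
          hdmem.1 hdmem.2.1 hdmem.2.2 (Ne.symm hde)
          (fun t u1 u2 u3 => (henum t u1 u2 u3).symm)
          he1 hd1.1 hd1.2
      · exfalso
        push_neg at hd1 he1
        obtain ⟨p⟩ := hconn.preconnected d a
        obtain ⟨d0, -, h1, h2⟩ := p.exists_boundary_dart {d, e} (by simp)
          (by simp [Ne.symm hdmem.1, Ne.symm hemem.1])
        have hadj0 : G.Adj d0.fst d0.snd := d0.adj
        have hsnd : d0.snd = a ∨ d0.snd = b ∨ d0.snd = c := by
          by_contra hcon
          push_neg at hcon
          rcases henum d0.snd hcon.1 hcon.2.1 hcon.2.2 with h | h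
          · exact h2 (by simp [h])
          · exact h2 (by simp [h])
        rcases (show d0.fst = d ∨ d0.fst = e by simpa using h1) with hf0 | hf0 <;>
          rcases hsnd with h | h | h
        · exact hd1.1 (by rw [← h, ← hf0]; exact hadj0.symm)
        · rcases hbfull d (by rw [← hf0]; exact (h ▸ hadj0).symm) with h' | h'
          · exact hdmem.1 h'
          · exact hdmem.2.2 h'
        · exact hd1.2 (by rw [← h, ← hf0]; exact hadj0.symm)
        · exact he1.1 (by rw [← h, ← hf0]; exact hadj0.symm)
        · rcases hbfull e (by rw [← hf0]; exact (h ▸ hadj0).symm) with h' | h'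
          · exact hemem.1 h'
          · exact hemem.2.2 h'
        · exact he1.2 (by rw [← h, ← hf0]; exact hadj0.symm)
end P4
section P5
variable {G : SimpleGraph V} [Fintype V] [DecidableEq V]

lemma forward_main (hconn : G.Connected)
    (hmin : ∀ g : V → ℕ, IsTRDF G g → 5 ≤ ∑ v, g v)
    (f : V → ℕ) (hf : IsTRDF G f) (h5 : ∑ v, f v = 5) :
    ∃ S T : Finset V, Dominating G S ∧ S.card = 2 ∧ TotalDominating G T ∧
      T.card = 3 ∧ S ⊆ T := by
  have hiso : ∀ t : V, ∃ s, G.Adj s t := by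
    intro t
    rcases Nat.eq_zero_or_pos (f t) with h | h
    · obtain ⟨u, hadj, -⟩ := hf.2.1 t h; exact ⟨u, hadj⟩
    · obtain ⟨u, hadj, -⟩ := hf.2.2 t h; exact ⟨u, hadj⟩
  have hsum := sum_decomp f hf.1
  rw [h5] at hsum
  have hcases : (Vtwo f).card = 0 ∨ (Vtwo f).card = 1 ∨ (Vtwo f).card = 2 := by omega
  rcases hcases with hA | hA | hA
  · -- |V₂| = 0 : all values are 1, |V| = 5
    have hAe : Vtwo f = ∅ := Finset.card_eq_zero.mp hA
    have hall : ∀ v, f v = 1 := by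
      intro v
      have hle := hf.1 v
      rcases Nat.lt_or_ge (f v) 1 with h | h
      · exfalso
        obtain ⟨w, -, hw⟩ := hf.2.1 v (by omega)
        have : w ∈ Vtwo f := (mem_Vtwo f).mpr hw
        simp [hAe] at this
      · rcases Nat.lt_or_ge (f v) 2 with h' | h'
        · omega
        · exfalso
          have : v ∈ Vtwo f := (mem_Vtwo f).mpr (by omega)
          simp [hAe] at this
    have huniv : Vone f = Finset.univ := by
      apply Finset.eq_univ_of_forall
      intro v; exact (mem_Vone f).mpr (hall v)
    have hcard : Fintype.card V = 5 := by
      rw [← Finset.card_univ, ← huniv]; omega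
    exact caseA0 hconn hiso hcard (fun p q hpq hdom => dom1_false hmin p q hpq hdom)
  · -- |V₂| = 1
    obtain ⟨u, hA1⟩ := Finset.card_eq_one.mp hA
    have hfu : f u = 2 := (mem_Vtwo f).mp (by rw [hA1]; simp)
    have hBcard : (Vone f).card = 3 := by omega
    obtain ⟨x, hxu, hxpos⟩ := hf.2.2 u (by omega)
    have hxu_ne : x ≠ u := G.ne_of_adj hxu
    have hfx : f x = 1 := by
      have hle := hf.1 x
      rcases Nat.lt_or_ge (f x) 2 with h | h
      · omega
      · exfalso
        have : x ∈ Vtwo f := (mem_Vtwo f).mpr (by omega)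
        rw [hA1] at this; simp at this; exact hxu_ne this
    have hxB : x ∈ Vone f := (mem_Vone f).mpr hfx
    have hEcard : ((Vone f).erase x).card = 2 := by
      rw [Finset.card_erase_of_mem hxB, hBcard]
    obtain ⟨y, z, hyz, hE⟩ := Finset.card_eq_two.mp hEcard
    have hymem : y ∈ (Vone f).erase x := by rw [hE]; simp
    have hzmem : z ∈ (Vone f).erase x := by rw [hE]; simp
    have hyx : y ≠ x := (Finset.mem_erase.mp hymem).1
    have hzx : z ≠ x := (Finset.mem_erase.mp hzmem).1
    have hfy : f y = 1 := (mem_Vone f).mp (Finset.mem_erase.mp hymem).2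
    have hfz : f z = 1 := (mem_Vone f).mp (Finset.mem_erase.mp hzmem).2
    have hyu : y ≠ u := fun h => by rw [h] at hfy; omega
    have hzu : z ≠ u := fun h => by rw [h] at hfz; omega
    have hxu' : G.Adj u x := hxu.symm
    have hcls : ∀ v, 0 < f v → v = u ∨ v = x ∨ v = y ∨ v = z := by
      intro v hv
      have hle := hf.1 v
      rcases Nat.lt_or_ge (f v) 2 with h | h
      · have : v ∈ Vone f := (mem_Vone f).mpr (by omega)
        by_cases hvx : v = x
        · exact Or.inr (Or.inl hvx)
        · have : v ∈ (Vone f).erase x := Finset.mem_erase.mpr ⟨hvx, this⟩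
          rw [hE] at this; simp at this
          rcases this with h' | h'
          · exact Or.inr (Or.inr (Or.inl h'))
          · exact Or.inr (Or.inr (Or.inr h'))
      · have : v ∈ Vtwo f := (mem_Vtwo f).mpr (by omega)
        rw [hA1] at this; simp at this; exact Or.inl this
    have hdom : ∀ v, v ≠ u → v ≠ x → v ≠ y → v ≠ z → G.Adj u v := by
      intro v h1 h2 h3 h4
      have hv0 : f v = 0 := by
        have hle := hf.1 v
        by_contra hc
        rcases hcls v (by omega) with h | h | h | h <;> tauto
      obtain ⟨w, hw, hw2⟩ := hf.2.1 v hv0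
      have : w ∈ Vtwo f := (mem_Vtwo f).mpr hw2
      rw [hA1] at this; simp at this
      rw [← this]; exact hw
    by_cases hz : G.Adj u z ∨ G.Adj x z
    · by_cases hy : G.Adj u y ∨ G.Adj x y
      · -- contradiction: weight-4 TRDF with V₂ = {u, x}
        exfalso
        have hdisj : ∀ v ∈ (∅ : Finset V), v ∉ ({u, x} : Finset V) := by simp
        have htr : IsTRDF G (gfun {u, x} ∅) := by
          refine gfun_isTRDF _ _ ?_ ?_
          · intro v hv hv'
            simp only [Finset.mem_insert, Finset.mem_singleton, not_or] at hv
            by_cases h3 : v = y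
            · subst h3
              rcases hy with h | h
              · exact ⟨u, by simp, h⟩
              · exact ⟨x, by simp, h⟩
            by_cases h4 : v = z
            · subst h4
              rcases hz with h | h
              · exact ⟨u, by simp, h⟩
              · exact ⟨x, by simp, h⟩
            · exact ⟨u, by simp, hdom v hv.1 hv.2 h3 h4⟩
          · intro v hv
            rcases hv with hv | hv
            · simp only [Finset.mem_insert, Finset.mem_singleton] at hv
              rcases hv with rfl | rfl
              · exact ⟨x, hxu, Or.inl (by simp)⟩
              · exact ⟨u, hxu', Or.inl (by simp)⟩
            · simp at hv
        have hle5 := hmin _ htr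
        rw [sum_gfun _ _ hdisj, card2' (Ne.symm hxu_ne)] at hle5
        simp at hle5
      · push_neg at hy
        exact caseA1 hconn f hf u x z y (Ne.symm hxu_ne) hyz.symm hzx hyx hzu hyu
          hxu' (fun v h1 h2 h3 h4 => hdom v h1 h2 h4 h3)
          (fun v hv => by rcases hcls v hv with h | h | h | h <;> tauto)
          hfy hy.1 hy.2
    · push_neg at hz
      exact caseA1 hconn f hf u x y z (Ne.symm hxu_ne) hyz hyx hzx hyu hzu
        hxu' hdom hcls hfz hz.1 hz.2
  · -- |V₂| = 2
    obtain ⟨p, q, hpq, hA2⟩ := Finset.card_eq_two.mp hA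
    have hBcard : (Vone f).card = 1 := by omega
    obtain ⟨x, hB1⟩ := Finset.card_eq_one.mp hBcard
    have hfp : f p = 2 := (mem_Vtwo f).mp (by rw [hA2]; simp)
    have hfq : f q = 2 := (mem_Vtwo f).mp (by rw [hA2]; simp)
    have hfx : f x = 1 := (mem_Vone f).mp (by rw [hB1]; simp)
    have hcls : ∀ v, 0 < f v → v = p ∨ v = q ∨ v = x := by
      intro v hv
      have hle := hf.1 v
      rcases Nat.lt_or_ge (f v) 2 with h | h
      · have : v ∈ Vone f := (mem_Vone f).mpr (by omega)
        rw [hB1] at this; simp at this; tauto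
      · have : v ∈ Vtwo f := (mem_Vtwo f).mpr (by omega)
        rw [hA2] at this; simp at this; tauto
    have h2 : ∀ v, f v = 2 → v = p ∨ v = q := by
      intro v hv
      have : v ∈ Vtwo f := (mem_Vtwo f).mpr hv
      rw [hA2] at this; simpa using this
    exact caseA2 f hf p q x hpq hcls h2 hfp hfq hfx
end P5

section Backward
variable {G : SimpleGraph V} [Fintype V] [DecidableEq V]

lemma small_tds (hconn : G.Connected) (hiso : ∀ t : V, ∃ s, G.Adj s t)
    (hcard : Fintype.card V ≤ 4) :
    ∃ W : Finset V, TotalDominating G W ∧ W.card ≤ 2 := by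
  obtain ⟨a⟩ := hconn.nonempty
  obtain ⟨b, hb⟩ := hiso a
  have hba : b ≠ a := G.ne_of_adj hb
  have hab2 : ({a, b} : Finset V).card = 2 := card2' (Ne.symm hba)
  by_cases h2 : Fintype.card V ≤ 2
  · have huniv : ({a, b} : Finset V) = Finset.univ :=
      Finset.eq_of_subset_of_card_le (Finset.subset_univ _)
        (by rw [Finset.card_univ] at *; omega)
    refine ⟨{a, b}, ?_, by omega⟩
    intro v
    have hv : v ∈ ({a, b} : Finset V) := huniv ▸ Finset.mem_univ v
    simp only [Finset.mem_insert, Finset.mem_singleton] at hv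
    rcases hv with rfl | rfl
    · exact ⟨b, by simp, hb⟩
    · exact ⟨a, by simp, hb.symm⟩
  · rcases (by omega : Fintype.card V = 3 ∨ Fintype.card V = 4) with h3 | h4
    · refine ⟨{a, b}, ?_, by omega⟩
      intro v
      by_cases h1 : v = a
      · subst h1; exact ⟨b, by simp, hb⟩
      by_cases hv2 : v = b
      · subst hv2; exact ⟨a, by simp, hb.symm⟩
      · obtain ⟨t, ht⟩ := hiso v
        have htv : t ≠ v := G.ne_of_adj ht
        have huniv : ({a, b, v} : Finset V) = Finset.univ :=
          Finset.eq_of_subset_of_card_le (Finset.subset_univ _)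
            (by rw [Finset.card_univ, h3,
              card3' (Ne.symm hba) (Ne.symm h1) (Ne.symm hv2)])
        have htm : t ∈ ({a, b, v} : Finset V) := huniv ▸ Finset.mem_univ t
        simp only [Finset.mem_insert, Finset.mem_singleton] at htm
        rcases htm with rfl | rfl | rfl
        · exact ⟨t, by simp, ht⟩
        · exact ⟨t, by simp, ht⟩
        · exact absurd rfl htv
    · have hD : (Finset.univ \ {a, b} : Finset V).card = 2 := by
        rw [Finset.card_sdiff_of_subset (Finset.subset_univ _), Finset.card_univ, h4, hab2]
      obtain ⟨c, d, hcd, hD2⟩ := Finset.card_eq_two.mp hD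
      have hcmem : c ∈ Finset.univ \ ({a, b} : Finset V) := by rw [hD2]; simp
      have hdmem : d ∈ Finset.univ \ ({a, b} : Finset V) := by rw [hD2]; simp
      simp only [Finset.mem_sdiff, Finset.mem_univ, true_and, Finset.mem_insert,
        Finset.mem_singleton, not_or] at hcmem hdmem
      have henum : ∀ t : V, t ≠ a → t ≠ b → t = c ∨ t = d := by
        intro t h1 h2
        have ht : t ∈ Finset.univ \ ({a, b} : Finset V) := by simp [h1, h2]
        rw [hD2] at ht; simpa using ht
      by_cases hc1 : G.Adj a c ∨ G.Adj b c
      · by_cases hd1 : G.Adj a d ∨ G.Adj b d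
        · refine ⟨{a, b}, ?_, by omega⟩
          intro v
          by_cases h1 : v = a
          · subst h1; exact ⟨b, by simp, hb⟩
          by_cases hv2 : v = b
          · subst hv2; exact ⟨a, by simp, hb.symm⟩
          rcases henum v h1 hv2 with rfl | rfl
          · rcases hc1 with h | h
            · exact ⟨a, by simp, h⟩
            · exact ⟨b, by simp, h⟩
          · rcases hd1 with h | h
            · exact ⟨a, by simp, h⟩
            · exact ⟨b, by simp, h⟩
        · push_neg at hd1
          obtain ⟨t, ht⟩ := hiso d
          have htv : t ≠ d := G.ne_of_adj ht
          have hta : t ≠ a := fun h => hd1.1 (h ▸ ht)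
          have htb : t ≠ b := fun h => hd1.2 (h ▸ ht)
          have htc : t = c := by rcases henum t hta htb with h | h; exact h; exact absurd h htv
          have hcdadj : G.Adj c d := htc ▸ ht
          rcases hc1 with h | h
          · refine ⟨{a, c}, ?_, by rw [card2' (Ne.symm hcmem.1)]⟩
            intro v
            by_cases h1 : v = a
            · subst h1; exact ⟨c, by simp, h.symm⟩
            by_cases hv2 : v = b
            · subst hv2; exact ⟨a, by simp, hb.symm⟩
            rcases henum v h1 hv2 with rfl | rfl
            · exact ⟨a, by simp, h⟩
            · exact ⟨c, by simp, hcdadj⟩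
          · refine ⟨{b, c}, ?_, by rw [card2' (Ne.symm hcmem.2)]⟩
            intro v
            by_cases h1 : v = a
            · subst h1; exact ⟨b, by simp, hb⟩
            by_cases hv2 : v = b
            · subst hv2; exact ⟨c, by simp, h.symm⟩
            rcases henum v h1 hv2 with rfl | rfl
            · exact ⟨b, by simp, h⟩
            · exact ⟨c, by simp, hcdadj⟩
      · by_cases hd1 : G.Adj a d ∨ G.Adj b d
        · push_neg at hc1
          obtain ⟨t, ht⟩ := hiso c
          have htv : t ≠ c := G.ne_of_adj ht
          have hta : t ≠ a := fun h => hc1.1 (h ▸ ht)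
          have htb : t ≠ b := fun h => hc1.2 (h ▸ ht)
          have htd : t = d := by
            rcases henum t hta htb with h | h; exact absurd h htv; exact h
          have hdcadj : G.Adj d c := htd ▸ ht
          rcases hd1 with h | h
          · refine ⟨{a, d}, ?_, by rw [card2' (Ne.symm hdmem.1)]⟩
            intro v
            by_cases h1 : v = a
            · subst h1; exact ⟨d, by simp, h.symm⟩
            by_cases hv2 : v = b
            · subst hv2; exact ⟨a, by simp, hb.symm⟩
            rcases henum v h1 hv2 with rfl | rfl
            · exact ⟨d, by simp, hdcadj⟩
            · exact ⟨a, by simp, h⟩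
          · refine ⟨{b, d}, ?_, by rw [card2' (Ne.symm hdmem.2)]⟩
            intro v
            by_cases h1 : v = a
            · subst h1; exact ⟨b, by simp, hb⟩
            by_cases hv2 : v = b
            · subst hv2; exact ⟨d, by simp, h.symm⟩
            rcases henum v h1 hv2 with rfl | rfl
            · exact ⟨d, by simp, hdcadj⟩
            · exact ⟨b, by simp, h⟩
        · exfalso
          push_neg at hc1 hd1
          obtain ⟨p⟩ := hconn.preconnected c a
          obtain ⟨d0, -, h1, hs2⟩ := p.exists_boundary_dart {c, d} (by simp)
            (by simp [Ne.symm hcmem.1, Ne.symm hdmem.1])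
          have hadj0 : G.Adj d0.fst d0.snd := d0.adj
          have hsnd : d0.snd = a ∨ d0.snd = b := by
            by_contra hcon
            push_neg at hcon
            rcases henum d0.snd hcon.1 hcon.2 with h | h
            · exact hs2 (by simp [h])
            · exact hs2 (by simp [h])
          rcases (show d0.fst = c ∨ d0.fst = d by simpa using h1) with hf0 | hf0 <;>
            rcases hsnd with h | h
          · exact hc1.1 (by rw [← h, ← hf0]; exact hadj0.symm)
          · exact hc1.2 (by rw [← h, ← hf0]; exact hadj0.symm)
          · exact hd1.1 (by rw [← h, ← hf0]; exact hadj0.symm)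
          · exact hd1.2 (by rw [← h, ← hf0]; exact hadj0.symm)

lemma backward (hconn : G.Connected) (hγt : gammaT G = 3)
    (S T : Finset V) (hS : Dominating G S) (hSc : S.card = gamma G)
    (hT : TotalDominating G T) (hTc : T.card = gammaT G) (hST : S ⊂ T) :
    gammaTR G = 5 := by
  have hT3 : T.card = 3 := by rw [hTc, hγt]
  have hiso : ∀ t : V, ∃ s, G.Adj s t := by
    intro t
    obtain ⟨u, -, hadj⟩ := hT t
    exact ⟨u, hadj⟩
  have hnoTDS : ∀ W : Finset V, TotalDominating G W → 3 ≤ W.card := by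
    intro W hW
    have := gammaT_le_of W hW
    omega
  have hS2 : S.card = 2 := by
    have hlt : S.card < 3 := hT3 ▸ Finset.card_lt_card hST
    interval_cases hc : S.card
    · exfalso
      rw [Finset.card_eq_zero] at hc; subst hc
      obtain ⟨v0, -⟩ := Finset.card_pos.mp (show 0 < T.card by omega)
      obtain ⟨u, hu, -⟩ := hS v0 (by simp)
      simp at hu
    · exfalso
      obtain ⟨pp, hp⟩ := Finset.card_eq_one.mp hc; subst hp
      obtain ⟨q, hq⟩ := hiso pp
      have hWtds : TotalDominating G {pp, q} := by
        intro v
        by_cases h1 : v = pp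
        · subst h1; exact ⟨q, by simp, hq⟩
        · obtain ⟨u, hu, hadj⟩ := hS v (by simpa using h1)
          simp at hu; subst hu
          exact ⟨u, by simp, hadj⟩
      have h3 := hnoTDS _ hWtds
      have hle : ({pp, q} : Finset V).card ≤ 2 :=
        le_trans (Finset.card_insert_le _ _) (by simp)
      omega
    · rfl
  have hd : ∀ v ∈ T \ S, v ∉ S := fun v hv => (Finset.mem_sdiff.mp hv).2
  have htr : IsTRDF G (gfun S (T \ S)) := by
    refine gfun_isTRDF _ _ (fun v hvS _ => hS v hvS) ?_
    intro v _
    obtain ⟨u, hu, hadj⟩ := hT v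
    refine ⟨u, hadj, ?_⟩
    by_cases h' : u ∈ S
    · exact Or.inl h'
    · exact Or.inr (Finset.mem_sdiff.mpr ⟨hu, h'⟩)
  have hsum5 : ∑ v, gfun S (T \ S) v = 5 := by
    rw [sum_gfun _ _ hd, Finset.card_sdiff_of_subset hST.subset]
    omega
  have hub : gammaTR G ≤ 5 := hsum5 ▸ gammaTR_le_of _ htr
  have hlb : 5 ≤ gammaTR G := by
    refine le_csInf ⟨5, gfun S (T \ S), htr, hsum5⟩ ?_
    rintro n ⟨g, hg, rfl⟩
    by_contra hlt
    push_neg at hlt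
    have hsum := sum_decomp g hg.1
    have h3 := hnoTDS _ (pos_tds g hg)
    rw [pos_card g] at h3
    have hA1 : (Vtwo g).card = 0 ∨ (Vtwo g).card = 1 := by omega
    rcases hA1 with hA | hA
    · -- all values 1, |V| ≤ 4
      have hAe : Vtwo g = ∅ := Finset.card_eq_zero.mp hA
      have hall : ∀ v, g v = 1 := by
        intro v
        have hle := hg.1 v
        rcases Nat.lt_or_ge (g v) 1 with h | h
        · exfalso
          obtain ⟨w, -, hw⟩ := hg.2.1 v (by omega)
          have : w ∈ Vtwo g := (mem_Vtwo g).mpr hw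
          simp [hAe] at this
        · rcases Nat.lt_or_ge (g v) 2 with h' | h'
          · omega
          · exfalso
            have : v ∈ Vtwo g := (mem_Vtwo g).mpr (by omega)
            simp [hAe] at this
      have huniv : Vone g = Finset.univ :=
        Finset.eq_univ_of_forall fun v => (mem_Vone g).mpr (hall v)
      have hcard : Fintype.card V ≤ 4 := by
        rw [← Finset.card_univ, ← huniv]; omega
      obtain ⟨W, hW, hWc⟩ := small_tds hconn hiso hcard
      have := hnoTDS W hW
      omega
    · -- |V₂| = 1, |V₁| = 2
      have hB2 : (Vone g).card = 2 := by omega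
      obtain ⟨u, hA1'⟩ := Finset.card_eq_one.mp hA
      obtain ⟨x, y, hxy, hB⟩ := Finset.card_eq_two.mp hB2
      have hfu : g u = 2 := (mem_Vtwo g).mp (by rw [hA1']; simp)
      have hfx : g x = 1 := (mem_Vone g).mp (by rw [hB]; simp)
      have hfy : g y = 1 := (mem_Vone g).mp (by rw [hB]; simp)
      have hcls : ∀ v, 0 < g v → v = u ∨ v = x ∨ v = y := by
        intro v hv
        have hle := hg.1 v
        rcases Nat.lt_or_ge (g v) 2 with h | h
        · have : v ∈ Vone g := (mem_Vone g).mpr (by omega)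
          rw [hB] at this; simp at this; tauto
        · have : v ∈ Vtwo g := (mem_Vtwo g).mpr (by omega)
          rw [hA1'] at this; simp at this; tauto
      obtain ⟨w, hwadj, hwpos⟩ := hg.2.2 u (by omega)
      have hwu : w ≠ u := G.ne_of_adj hwadj
      have hwxy : w = x ∨ w = y := by
        rcases hcls w hwpos with h | h | h
        · exact absurd h hwu
        · exact Or.inl h
        · exact Or.inr h
      have hxu : x ≠ u := fun h => by rw [h] at hfx; omega
      have hyu : y ≠ u := fun h => by rw [h] at hfy; omega
      have hWtds : TotalDominating G {u, w} := by
        intro v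
        rcases Nat.eq_zero_or_pos (g v) with h | h
        · obtain ⟨t, htadj, ht2⟩ := hg.2.1 v h
          have : t ∈ Vtwo g := (mem_Vtwo g).mpr ht2
          rw [hA1'] at this; simp at this; subst this
          exact ⟨t, by simp, htadj⟩
        · by_cases hvu : v = u
          · subst hvu; exact ⟨w, by simp, hwadj⟩
          by_cases hvw : v = w
          · subst hvw; exact ⟨u, by simp, hwadj.symm⟩
          · obtain ⟨t, htadj, htpos⟩ := hg.2.2 v h
            have htv : t ≠ v := G.ne_of_adj htadj
            have htc := hcls t htpos
            have hvc := hcls v h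
            have : t = u ∨ t = w := by
              rcases hvc with rfl | rfl | rfl
              · exact absurd rfl hvu
              · rcases htc with rfl | rfl | rfl
                · exact Or.inl rfl
                · exact absurd rfl htv
                · rcases hwxy with rfl | rfl
                  · exact absurd rfl hvw
                  · exact Or.inr rfl
              · rcases htc with rfl | rfl | rfl
                · exact Or.inl rfl
                · rcases hwxy with rfl | rfl
                  · exact Or.inr rfl
                  · exact absurd rfl hvw
                · exact absurd rfl htv
            rcases this with rfl | rfl
            · exact ⟨t, by simp, htadj⟩
            · exact ⟨t, by simp, htadj⟩
      have h3' := hnoTDS _ hWtds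
      have hle : ({u, w} : Finset V).card ≤ 2 :=
        le_trans (Finset.card_insert_le _ _) (by simp)
      omega
  exact le_antisymm hub hlb
end Backward

theorem stmt12 (G : SimpleGraph V) [Fintype V] (hconn : G.Connected) :
    gammaTR G = 5 ↔
      gammaT G = 3 ∧ ∃ S T : Finset V, Dominating G S ∧ S.card = gamma G ∧
        TotalDominating G T ∧ T.card = gammaT G ∧ S ⊂ T := by
  classical
  constructor
  · intro h5
    have hne : {n | ∃ f : V → ℕ, IsTRDF G f ∧ ∑ v, f v = n}.Nonempty := by
      by_contra hc
      rw [Set.not_nonempty_iff_eq_empty] at hc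
      rw [gammaTR, hc, Nat.sInf_empty] at h5
      omega
    obtain ⟨f, hf, hsum⟩ := Nat.sInf_mem hne
    have hsum5 : ∑ v, f v = 5 := by rw [hsum]; exact h5
    have hmin : ∀ g : V → ℕ, IsTRDF G g → 5 ≤ ∑ v, g v := by
      intro g hg
      exact le_of_eq_of_le h5.symm (gammaTR_le_of g hg)
    obtain ⟨S, T, hS, hS2, hT, hT3, hST⟩ := forward_main hconn hmin f hf hsum5
    have hiso : NoIsolated G := by
      intro v
      obtain ⟨u, -, hadj⟩ := hT v
      exact ⟨u, hadj⟩
    exact assemble hmin hiso S T hS hT hS2 hT3 hST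
  · rintro ⟨hγt, S, T, hS, hSc, hT, hTc, hST⟩
    exact backward hconn hγt S T hS hSc hT hTc hST
end

section
/- A disconnected graph G is 6-γ_tR-edge-supercritical if and only if G is the disjoint union of two complete graphs K_n and K_m with n, m ≥ 3. -/
open SimpleGraph Finset

variable {V : Type*}

/-!
A total Roman dominating function has weight at least `2` on every component and at least `3`
on every component with at least three vertices. The constant function `1` gives
`|V| ≥ γ_tR(G) = 6`, and on at least six vertices a disconnected graph has `γ_tR ≥ 5`; hence
every `G + uv` is connected. So the non-edges of `G` are exactly the pairs joining two
components, i.e. `G` is the union of two cliques, and a clique on two vertices would give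
`γ_tR(G) ≤ 5` (weights `1, 1` on it, `2, 1` on the other one). Conversely, for `K_n ∪ K_m` with
`n, m ≥ 3` the bound `3 + 3` is attained by weights `2, 1` on each clique, and after joining the
cliques by `uv` the bound `2 + 2` is attained by `2` on `u` and on `v`.
-/

namespace SimpleGraph

variable {G : SimpleGraph V}

lemma Reachable.iff_of_forall_adj {p : V → Prop} (hp : ∀ x y, G.Adj x y → (p x ↔ p y))
    {x y : V} (h : G.Reachable x y) : p x ↔ p y := by
  obtain ⟨w⟩ := h
  induction w with
  | nil => rfl
  | cons hxy _ ih => exact (hp _ _ hxy).trans ih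

end SimpleGraph

lemma addEdge_adj {G : SimpleGraph V} {u v x y : V} :
    (addEdge G u v).Adj x y ↔ G.Adj x y ∨ ((x = u ∧ y = v ∨ x = v ∧ y = u) ∧ x ≠ y) := by
  simp [addEdge]

lemma addEdge_comm (G : SimpleGraph V) (u v : V) : addEdge G u v = addEdge G v u := by
  simp [addEdge, Sym2.eq_swap]

section TotalRoman

variable {G : SimpleGraph V} {f : V → ℕ}

lemma IsTRDF.two_le_sum (hf : IsTRDF G f) {S : Finset V} {w : V} (hw : w ∈ S)
    (hS : ∀ u, G.Adj u w → u ∈ S) : 2 ≤ ∑ v ∈ S, f v := by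
  obtain ⟨-, hzero, hpos⟩ := hf
  rcases Nat.eq_zero_or_pos (f w) with h | h
  · obtain ⟨u, huw, hu⟩ := hzero w h
    exact hu ▸ single_le_sum (fun _ _ => Nat.zero_le _) (hS u huw)
  · obtain ⟨u, huw, hu⟩ := hpos w h
    have := add_le_sum (fun _ _ => Nat.zero_le _) (hS u huw) hw huw.ne (f := f)
    omega

lemma IsTRDF.three_le_sum (hf : IsTRDF G f) {S : Finset V}
    (hS : ∀ u v, G.Adj u v → v ∈ S → u ∈ S) (hcard : 3 ≤ #S) : 3 ≤ ∑ v ∈ S, f v := by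
  obtain ⟨-, hzero, hpos⟩ := hf
  by_cases htwo : ∃ w ∈ S, f w = 2
  · obtain ⟨w, hw, hw2⟩ := htwo
    obtain ⟨u, huw, hu⟩ := hpos w (by omega)
    have := add_le_sum (fun _ _ => Nat.zero_le _) (hS u w huw hw) hw huw.ne (f := f)
    omega
  · push Not at htwo
    have hone : ∀ w ∈ S, 1 ≤ f w := fun w hw => Nat.pos_of_ne_zero fun h0 => by
      obtain ⟨u, huw, hu⟩ := hzero w h0
      exact htwo u (hS u w huw hw) hu
    calc 3 ≤ #S := hcard
      _ = #S • 1 := by rw [smul_eq_mul, mul_one]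
      _ ≤ ∑ v ∈ S, f v := card_nsmul_le_sum _ _ _ hone

lemma IsTRDF.five_le_sum_of_not_reachable [Fintype V] (hf : IsTRDF G f)
    (hV : 6 ≤ Fintype.card V) {a b : V} (hab : ¬G.Reachable a b) : 5 ≤ ∑ v, f v := by
  classical
  set S : Finset V := univ.filter (G.Reachable a) with hSdef
  have hS : ∀ u v, G.Adj u v → v ∈ S → u ∈ S := by
    simp only [hSdef, mem_filter, mem_univ, true_and]
    exact fun u v huv hv => hv.trans huv.symm.reachable
  have hSc : ∀ u v, G.Adj u v → v ∈ Sᶜ → u ∈ Sᶜ := by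
    simp only [mem_compl]
    exact fun u v huv hv hu => hv (hS v u huv.symm hu)
  have haS : a ∈ S := by simp [hSdef]
  have hbS : b ∈ Sᶜ := by simpa [hSdef] using hab
  have hcard : #S + #Sᶜ = Fintype.card V := card_add_card_compl S
  rw [← sum_add_sum_compl S]
  rcases le_or_gt 3 #S with h | h
  · have := hf.three_le_sum hS h
    have := hf.two_le_sum hbS (fun u hu => hSc u b hu hbS)
    omega
  · have := hf.three_le_sum hSc (by omega)
    have := hf.two_le_sum haS (fun u hu => hS u a hu haS)
    omega

end TotalRoman

section GammaTR

variable [Fintype V] {G : SimpleGraph V}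

lemma gammaTR_le {f : V → ℕ} (hf : IsTRDF G f) : gammaTR G ≤ ∑ v, f v :=
  Nat.sInf_le ⟨f, hf, rfl⟩

lemma le_gammaTR (hG : NoIsolated G) {k : ℕ} (hk : ∀ f, IsTRDF G f → k ≤ ∑ v, f v) :
    k ≤ gammaTR G := by
  have hone : IsTRDF G fun _ => 1 :=
    ⟨fun _ => by norm_num, fun _ h => absurd h one_ne_zero,
      fun v _ => (hG v).imp fun _ huv => ⟨huv, one_pos⟩⟩
  refine le_csInf ⟨_, _, hone, rfl⟩ ?_
  rintro _ ⟨f, hf, rfl⟩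
  exact hk f hf

lemma exists_isTRDF_sum_eq_gammaTR (h : gammaTR G ≠ 0) :
    ∃ f, IsTRDF G f ∧ ∑ v, f v = gammaTR G :=
  Nat.sInf_mem (Nat.nonempty_of_pos_sInf (Nat.pos_of_ne_zero h))

lemma gammaTR_le_card_add_card [DecidableEq V] {P Q : Finset V} (hQP : Q ⊆ P)
    (hP : ∀ v ∈ P, ∃ u ∈ P, G.Adj u v) (hQ : ∀ v ∉ P, ∃ u ∈ Q, G.Adj u v) :
    gammaTR G ≤ #P + #Q := by
  set f : V → ℕ := fun v => (if v ∈ P then 1 else 0) + (if v ∈ Q then 1 else 0) with hfdef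
  have hf : IsTRDF G f := by
    refine ⟨fun v => by simp only [hfdef]; split_ifs <;> norm_num, fun v hv => ?_, fun v hv => ?_⟩
    · have hvP : v ∉ P := fun h => by simp [hfdef, h] at hv
      obtain ⟨u, hu, huv⟩ := hQ v hvP
      exact ⟨u, huv, by simp [hfdef, hu, hQP hu]⟩
    · have hvP : v ∈ P := by
        by_contra h
        have hvQ : v ∉ Q := fun hq => h (hQP hq)
        simp [hfdef, h, hvQ] at hv
      obtain ⟨u, hu, huv⟩ := hP v hvP
      exact ⟨u, huv, by simp [hfdef, hu]⟩
  calc gammaTR G ≤ ∑ v, f v := gammaTR_le hf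
    _ = #P + #Q := by simp [hfdef, sum_add_distrib]

lemma gammaTR_le_card (hG : NoIsolated G) : gammaTR G ≤ Fintype.card V := by
  classical
  simpa using gammaTR_le_card_add_card (G := G) (P := univ) (Q := ∅) (empty_subset _)
    (fun v _ => by simpa using hG v) (by simp)

lemma preconnected_of_gammaTR_le_four (hV : 6 ≤ Fintype.card V) (h₀ : gammaTR G ≠ 0)
    (h : gammaTR G ≤ 4) : G.Preconnected := fun a b => by
  by_contra hab
  obtain ⟨f, hf, hsum⟩ := exists_isTRDF_sum_eq_gammaTR h₀
  have := hf.five_le_sum_of_not_reachable hV hab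
  omega

end GammaTR

/-- `G` is the disjoint union of the complete graphs on `A` and on `Aᶜ`. -/
def IsCliqueSplit (G : SimpleGraph V) (A : Finset V) : Prop :=
  ∀ u v, G.Adj u v ↔ u ≠ v ∧ (u ∈ A ↔ v ∈ A)

namespace IsCliqueSplit

variable {G : SimpleGraph V} {A : Finset V}

lemma mem_iff_of_adj (hG : IsCliqueSplit G A) {u v : V} (h : G.Adj u v) : u ∈ A ↔ v ∈ A :=
  ((hG u v).1 h).2

lemma exists_adj (hG : IsCliqueSplit G A) (hA : 2 ≤ #A) {v : V} (hv : v ∈ A) :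
    ∃ u, G.Adj u v := by
  obtain ⟨u, hu, huv⟩ := exists_mem_ne (by omega : 1 < #A) v
  exact ⟨u, (hG u v).2 ⟨huv, iff_of_true hu hv⟩⟩

lemma two_le_card (hG : IsCliqueSplit G A) (hni : NoIsolated G) {v : V} (hv : v ∈ A) :
    2 ≤ #A := by
  obtain ⟨u, huv⟩ := hni v
  exact one_lt_card.2 ⟨u, (hG.mem_iff_of_adj huv).2 hv, v, hv, huv.ne⟩

variable {u v : V}

lemma two_le_sum_addEdge (hG : IsCliqueSplit G A) (hA : 2 ≤ #A) (hu : u ∈ A) (hv : v ∉ A)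
    {f : V → ℕ} (hf : IsTRDF (addEdge G u v) f) : 2 ≤ ∑ w ∈ A, f w := by
  obtain ⟨w, hw, hwu⟩ := exists_mem_ne (by omega : 1 < #A) u
  refine hf.two_le_sum hw fun x hx => ?_
  rcases addEdge_adj.1 hx with hx | ⟨⟨-, rfl⟩ | ⟨-, rfl⟩, -⟩
  · exact (hG.mem_iff_of_adj hx).2 hw
  · exact absurd hw hv
  · exact absurd rfl hwu

variable [Fintype V] [DecidableEq V]

lemma compl (hG : IsCliqueSplit G A) : IsCliqueSplit G Aᶜ := fun u v => by
  simp only [hG u v, mem_compl, not_iff_not]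

lemma noIsolated (hG : IsCliqueSplit G A) (hA : 2 ≤ #A) (hB : 2 ≤ #Aᶜ) : NoIsolated G := by
  intro v
  by_cases hv : v ∈ A
  · exact hG.exists_adj hA hv
  · exact hG.compl.exists_adj hB (mem_compl.2 hv)

lemma six_le_sum (hG : IsCliqueSplit G A) (hA : 3 ≤ #A) (hB : 3 ≤ #Aᶜ) {f : V → ℕ}
    (hf : IsTRDF G f) : 6 ≤ ∑ v, f v := by
  have h₁ := hf.three_le_sum (fun u v huv hv => (hG.mem_iff_of_adj huv).2 hv) hA
  have h₂ := hf.three_le_sum (fun u v huv hv => (hG.compl.mem_iff_of_adj huv).2 hv) hB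
  rw [← sum_add_sum_compl A]
  omega

lemma gammaTR_le_six (hG : IsCliqueSplit G A) (hA : 2 ≤ #A) (hB : 2 ≤ #Aᶜ) :
    gammaTR G ≤ 6 := by
  obtain ⟨a₁, ha₁, a₂, ha₂, ha⟩ := one_lt_card.1 (by omega : 1 < #A)
  obtain ⟨b₁, hb₁, b₂, hb₂, hb⟩ := one_lt_card.1 (by omega : 1 < #Aᶜ)
  rw [mem_compl] at hb₁ hb₂
  have hP : ∀ v ∈ ({a₁, a₂, b₁, b₂} : Finset V),
      ∃ u ∈ ({a₁, a₂, b₁, b₂} : Finset V), G.Adj u v := by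
    simp only [mem_insert, mem_singleton]
    rintro v (rfl | rfl | rfl | rfl)
    · exact ⟨a₂, by simp, (hG _ _).2 ⟨ha.symm, by tauto⟩⟩
    · exact ⟨a₁, by simp, (hG _ _).2 ⟨ha, by tauto⟩⟩
    · exact ⟨b₂, by simp, (hG _ _).2 ⟨hb.symm, by tauto⟩⟩
    · exact ⟨b₁, by simp, (hG _ _).2 ⟨hb, by tauto⟩⟩
  have hQ : ∀ v ∉ ({a₁, a₂, b₁, b₂} : Finset V), ∃ u ∈ ({a₁, b₁} : Finset V), G.Adj u v := by
    simp only [mem_insert, mem_singleton, not_or]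
    rintro v ⟨hv₁, -, hv₃, -⟩
    by_cases hv : v ∈ A
    · exact ⟨a₁, by simp, (hG _ _).2 ⟨Ne.symm hv₁, by tauto⟩⟩
    · exact ⟨b₁, by simp, (hG _ _).2 ⟨Ne.symm hv₃, by tauto⟩⟩
  calc gammaTR G ≤ #{a₁, a₂, b₁, b₂} + #{a₁, b₁} := gammaTR_le_card_add_card (by grind) hP hQ
    _ ≤ 4 + 2 := add_le_add card_le_four card_le_two

lemma gammaTR_le_card_add_three (hG : IsCliqueSplit G A) (hA : 2 ≤ #A) (hB : 2 ≤ #Aᶜ) :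
    gammaTR G ≤ #A + 3 := by
  obtain ⟨b₁, hb₁, b₂, hb₂, hb⟩ := one_lt_card.1 (by omega : 1 < #Aᶜ)
  rw [mem_compl] at hb₁ hb₂
  have hP : ∀ v ∈ A ∪ {b₁, b₂}, ∃ u ∈ A ∪ {b₁, b₂}, G.Adj u v := by
    simp only [mem_union, mem_insert, mem_singleton]
    rintro v (hv | rfl | rfl)
    · exact (hG.exists_adj hA hv).imp fun u hu => ⟨Or.inl ((hG.mem_iff_of_adj hu).2 hv), hu⟩
    · exact ⟨b₂, by simp, (hG _ _).2 ⟨hb.symm, by tauto⟩⟩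
    · exact ⟨b₁, by simp, (hG _ _).2 ⟨hb, by tauto⟩⟩
  have hQ : ∀ v ∉ A ∪ {b₁, b₂}, ∃ u ∈ ({b₁} : Finset V), G.Adj u v := by
    simp only [mem_union, mem_insert, mem_singleton, not_or]
    rintro v ⟨hv, hv₁, -⟩
    exact ⟨b₁, by simp, (hG _ _).2 ⟨Ne.symm hv₁, by tauto⟩⟩
  calc gammaTR G ≤ #(A ∪ {b₁, b₂}) + #{b₁} := gammaTR_le_card_add_card (by grind) hP hQ
    _ ≤ #A + 2 + 1 := by grw [card_union_le, card_le_two, card_singleton]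

lemma gammaTR_addEdge_le_four (hG : IsCliqueSplit G A) (hu : u ∈ A) (hv : v ∉ A) :
    gammaTR (addEdge G u v) ≤ 4 := by
  have huv : u ≠ v := by rintro rfl; exact hv hu
  have hP : ∀ w ∈ ({u, v} : Finset V), ∃ x ∈ ({u, v} : Finset V), (addEdge G u v).Adj x w := by
    simp only [mem_insert, mem_singleton]
    rintro w (rfl | rfl)
    · exact ⟨v, by simp, addEdge_adj.2 (Or.inr ⟨Or.inr ⟨rfl, rfl⟩, huv.symm⟩)⟩
    · exact ⟨u, by simp, addEdge_adj.2 (Or.inr ⟨Or.inl ⟨rfl, rfl⟩, huv⟩)⟩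
  have hQ : ∀ w ∉ ({u, v} : Finset V), ∃ x ∈ ({u, v} : Finset V), (addEdge G u v).Adj x w := by
    simp only [mem_insert, mem_singleton, not_or]
    rintro w ⟨hwu, hwv⟩
    by_cases hw : w ∈ A
    · exact ⟨u, by simp, addEdge_adj.2 (Or.inl ((hG _ _).2 ⟨Ne.symm hwu, by tauto⟩))⟩
    · exact ⟨v, by simp, addEdge_adj.2 (Or.inl ((hG _ _).2 ⟨Ne.symm hwv, by tauto⟩))⟩
  calc gammaTR (addEdge G u v) ≤ #{u, v} + #{u, v} := gammaTR_le_card_add_card subset_rfl hP hQ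
    _ ≤ 2 + 2 := add_le_add card_le_two card_le_two

lemma gammaTR_addEdge_of_mem_of_notMem (hG : IsCliqueSplit G A) (hA : 2 ≤ #A)
    (hB : 2 ≤ #Aᶜ) (hu : u ∈ A) (hv : v ∉ A) : gammaTR (addEdge G u v) = 4 := by
  refine (hG.gammaTR_addEdge_le_four hu hv).antisymm (le_gammaTR ?_ fun f hf => ?_)
  · exact fun w => (hG.noIsolated hA hB w).imp fun _ h => addEdge_adj.2 (Or.inl h)
  · have h₁ := hG.two_le_sum_addEdge hA hu hv hf
    have h₂ := hG.compl.two_le_sum_addEdge hB (mem_compl.2 hv) (by simpa using hu)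
      (addEdge_comm G u v ▸ hf)
    rw [← sum_add_sum_compl A]
    omega

lemma gammaTR_addEdge (hG : IsCliqueSplit G A) (hA : 2 ≤ #A) (hB : 2 ≤ #Aᶜ) (huv : u ≠ v)
    (h : ¬G.Adj u v) : gammaTR (addEdge G u v) = 4 := by
  have hside : ¬(u ∈ A ↔ v ∈ A) := fun hs => h ((hG u v).2 ⟨huv, hs⟩)
  by_cases hu : u ∈ A
  · exact hG.gammaTR_addEdge_of_mem_of_notMem hA hB hu (by tauto)
  · exact hG.compl.gammaTR_addEdge_of_mem_of_notMem hB (by simpa using hA) (mem_compl.2 hu)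
      (by rw [mem_compl, not_not]; tauto)

lemma gammaTR_eq_six (hG : IsCliqueSplit G A) (hA : 3 ≤ #A) (hB : 3 ≤ #Aᶜ) :
    gammaTR G = 6 :=
  (hG.gammaTR_le_six (by omega) (by omega)).antisymm
    (le_gammaTR (hG.noIsolated (by omega) (by omega)) fun _ => hG.six_le_sum hA hB)

lemma exists_not_adj (hG : IsCliqueSplit G A) (hA : A.Nonempty) (hB : Aᶜ.Nonempty) :
    ∃ u v, u ≠ v ∧ ¬G.Adj u v := by
  obtain ⟨a, ha⟩ := hA
  obtain ⟨b, hb⟩ := hB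
  rw [mem_compl] at hb
  exact ⟨a, b, fun h => hb (h ▸ ha), fun h => hb ((hG.mem_iff_of_adj h).1 ha)⟩

end IsCliqueSplit

section Supercritical

variable {G : SimpleGraph V}

lemma isCliqueSplit_of_preconnected_addEdge
    (hG : ∀ u v, u ≠ v → ¬G.Adj u v → (addEdge G u v).Preconnected) {a b : V}
    (hab : ¬G.Reachable a b) {A : Finset V} (hA : ∀ w, w ∈ A ↔ G.Reachable a w) :
    IsCliqueSplit G A := by
  intro u v
  simp only [hA]
  refine ⟨fun h => ⟨h.ne, fun hu => hu.trans h.reachable, fun hv => hv.trans h.symm.reachable⟩,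
    fun ⟨huv, hside⟩ => ?_⟩
  by_contra hnadj
  -- the new edge `uv` stays on one side, so `a` and `b` remain separated in `G + uv`
  have hstep : ∀ x y, (addEdge G u v).Adj x y → (G.Reachable a x ↔ G.Reachable a y) := by
    intro x y hxy
    rcases addEdge_adj.1 hxy with h | ⟨⟨rfl, rfl⟩ | ⟨rfl, rfl⟩, -⟩
    · exact ⟨fun hx => hx.trans h.reachable, fun hy => hy.trans h.symm.reachable⟩
    · exact hside
    · exact hside.symm
  exact hab ((hG u v huv hnadj a b).iff_of_forall_adj hstep |>.1 (Reachable.refl a))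

lemma exists_isCliqueSplit_of_supercritical [Fintype V] [DecidableEq V] (hdisc : ¬G.Connected)
    (h6 : gammaTR G = 6) (hni : NoIsolated G)
    (hsc : ∀ u v, u ≠ v → ¬G.Adj u v → gammaTR (addEdge G u v) = 4) :
    ∃ A, IsCliqueSplit G A ∧ 3 ≤ #A ∧ 3 ≤ #Aᶜ := by
  have hV : 6 ≤ Fintype.card V := h6 ▸ gammaTR_le_card hni
  obtain ⟨a, b, hab⟩ : ∃ a b, ¬G.Reachable a b := by
    have : Nonempty V := Fintype.card_pos_iff.1 (by omega)
    simpa [connected_iff, Preconnected] using hdisc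
  classical
  set A := univ.filter (G.Reachable a)
  have hG : IsCliqueSplit G A := isCliqueSplit_of_preconnected_addEdge
    (fun u v huv h => preconnected_of_gammaTR_le_four hV (by simp [hsc u v huv h])
      (hsc u v huv h).le) hab (by simp [A])
  have hA : 2 ≤ #A := hG.two_le_card hni (by simp [A] : a ∈ A)
  have hB : 2 ≤ #Aᶜ := hG.compl.two_le_card hni (by simpa [A] using hab)
  refine ⟨A, hG, ?_, ?_⟩
  · by_contra h
    have := hG.gammaTR_le_card_add_three hA hB
    omega
  · by_contra h
    have := hG.compl.gammaTR_le_card_add_three hB (by simpa using hA)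
    omega

end Supercritical

section Iso

variable {α β : Type*}

lemma top_sum_top_adj {x y : α ⊕ β} :
    ((⊤ : SimpleGraph α) ⊕g (⊤ : SimpleGraph β)).Adj x y ↔ x ≠ y ∧ (x.isLeft ↔ y.isLeft) := by
  cases x <;> cases y <;> simp

lemma isCliqueSplit_iff_adj {G : SimpleGraph V} {A : Finset V} (e : V ≃ α ⊕ β)
    (hA : ∀ v, v ∈ A ↔ (e v).isLeft) :
    IsCliqueSplit G A ↔
      ∀ u v, ((⊤ : SimpleGraph α) ⊕g (⊤ : SimpleGraph β)).Adj (e u) (e v) ↔ G.Adj u v := by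
  simp only [IsCliqueSplit, top_sum_top_adj, e.injective.ne_iff, hA]
  exact forall₂_congr fun _ _ => iff_comm

variable [Fintype V] [DecidableEq V] {G : SimpleGraph V}

lemma IsCliqueSplit.nonempty_iso {A : Finset V} (hG : IsCliqueSplit G A) :
    Nonempty (G ≃g (⊤ : SimpleGraph (Fin #A)) ⊕g (⊤ : SimpleGraph (Fin #Aᶜ))) := by
  let e : V ≃ Fin #A ⊕ Fin #Aᶜ := (Equiv.sumCompl (· ∈ A)).symm.trans
    (A.equivFin.sumCongr ((Equiv.subtypeEquivRight fun _ => mem_compl.symm).trans Aᶜ.equivFin))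
  have hA : ∀ v, v ∈ A ↔ (e v).isLeft := fun v => by
    by_cases hv : v ∈ A <;> simp [e, hv]
  exact ⟨⟨e, (isCliqueSplit_iff_adj e hA).1 hG _ _⟩⟩

lemma exists_isCliqueSplit_of_iso {n m : ℕ}
    (e : G ≃g (⊤ : SimpleGraph (Fin n)) ⊕g (⊤ : SimpleGraph (Fin m))) :
    ∃ A, IsCliqueSplit G A ∧ #A = n ∧ #Aᶜ = m := by
  set A := univ.map (Function.Embedding.inl.trans e.toEquiv.symm.toEmbedding)
  have hA : ∀ v, v ∈ A ↔ (e.toEquiv v).isLeft := fun v => by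
    simp only [A, mem_map, mem_univ, true_and, Sum.isLeft_iff]
    exact exists_congr fun _ => e.toEquiv.symm_apply_eq.trans eq_comm
  have hcard : #A = n := by simp [A]
  refine ⟨A, (isCliqueSplit_iff_adj e.toEquiv hA).2 fun _ _ => e.map_rel_iff, hcard, ?_⟩
  rw [card_compl, hcard, Fintype.card_congr e.toEquiv]
  simp

lemma exists_iso_top_sum_top_iff :
    (∃ n m, 3 ≤ n ∧ 3 ≤ m ∧
        Nonempty (G ≃g (⊤ : SimpleGraph (Fin n)) ⊕g (⊤ : SimpleGraph (Fin m)))) ↔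
      ∃ A, IsCliqueSplit G A ∧ 3 ≤ #A ∧ 3 ≤ #Aᶜ := by
  constructor
  · rintro ⟨n, m, hn, hm, ⟨e⟩⟩
    obtain ⟨A, hG, rfl, rfl⟩ := exists_isCliqueSplit_of_iso e
    exact ⟨A, hG, hn, hm⟩
  · rintro ⟨A, hG, hA, hB⟩
    exact ⟨#A, #Aᶜ, hA, hB, hG.nonempty_iso⟩

end Iso

theorem stmt13 (G : SimpleGraph V) [Fintype V] (hdisc : ¬G.Connected) :
    (gammaTR G = 6 ∧ NoIsolated G ∧ (∃ u v : V, u ≠ v ∧ ¬G.Adj u v) ∧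
        ∀ u v : V, u ≠ v → ¬G.Adj u v → gammaTR (addEdge G u v) = 4) ↔
      ∃ n m : ℕ, 3 ≤ n ∧ 3 ≤ m ∧
        Nonempty (G ≃g ((⊤ : SimpleGraph (Fin n)) ⊕g (⊤ : SimpleGraph (Fin m)))) := by
  classical
  rw [exists_iso_top_sum_top_iff]
  constructor
  · rintro ⟨h6, hni, -, hsc⟩
    exact exists_isCliqueSplit_of_supercritical hdisc h6 hni hsc
  · rintro ⟨A, hG, hA, hB⟩
    exact ⟨hG.gammaTR_eq_six hA hB, hG.noIsolated (by omega) (by omega),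
      hG.exists_not_adj (card_pos.1 (by omega)) (card_pos.1 (by omega)),
      fun u v huv h => hG.gammaTR_addEdge (by omega) (by omega) huv h⟩
end

section
/- Let G be a connected γ_tR-edge-removal-critical graph (i.e., γ_tR(G − e) > γ_tR(G) for every edge e, where γ_tR(G − e) = ∞ if e is incident with a degree-1 vertex). Then for any minimum-weight total Roman dominating function f on G, every vertex u with f(u) = 0 has degree 1 in G; moreover, the minimum degree of G is 1. -/
open SimpleGraph Finset

variable {V : Type*}

theorem stmt15 (G : SimpleGraph V) [Fintype V] (hconn : G.Connected)
    (hiso : NoIsolated G)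
    (hcrit : ∀ u v : V, G.Adj u v →
      degreeN G u = 1 ∨ degreeN G v = 1 ∨ gammaTR G < gammaTR (deleteEdge G u v))
    (f : V → ℕ) (hf : IsTRDF G f) (hmin : ∑ w, f w = gammaTR G) :
    (∀ u : V, f u = 0 → degreeN G u = 1) ∧ ∃ v : V, degreeN G v = 1 := by
  have hle : ∀ (H : SimpleGraph V) (g : V → ℕ), IsTRDF H g → gammaTR H ≤ ∑ v, g v :=
    fun H g hg => Nat.sInf_le ⟨g, hg, rfl⟩
  -- a degree-one vertex adjacent to a zero vertex is impossible
  have hdeg1 : ∀ u x : V, G.Adj u x → f u = 0 → degreeN G x ≠ 1 := by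
    intro u x hux hu h1
    obtain ⟨a, ha⟩ := Set.ncard_eq_one.mp h1
    have hua : u = a := by
      have : u ∈ {y | G.Adj x y} := hux.symm
      rw [ha] at this; exact this
    subst hua
    rcases Nat.eq_zero_or_pos (f x) with hx | hx
    · obtain ⟨u', hadj, h2⟩ := hf.2.1 x hx
      have : u' ∈ {y | G.Adj x y} := hadj.symm
      rw [ha] at this
      rw [this] at h2; omega
    · obtain ⟨u', hadj, h2⟩ := hf.2.2 x hx
      have : u' ∈ {y | G.Adj x y} := hadj.symm
      rw [ha] at this
      rw [this] at h2; omega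
  have key : ∀ u : V, f u = 0 → degreeN G u = 1 := by
    intro u hu
    by_contra hdeg
    obtain ⟨w, hw, hfw⟩ := hf.2.1 u hu
    have hwmem : w ∈ {y | G.Adj u y} := hw.symm
    have h1 : 1 < degreeN G u := by
      have hpos : 0 < degreeN G u :=
        (Set.ncard_pos (Set.toFinite _)).mpr ⟨w, hwmem⟩
      unfold degreeN at *; omega
    obtain ⟨x, hx, hxw⟩ := Set.exists_ne_of_one_lt_ncard h1 w
    have hux : G.Adj u x := hx
    -- f is a TRDF of G - ux
    have htrdf : IsTRDF (deleteEdge G u x) f := by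
      refine ⟨hf.1, ?_, ?_⟩
      · intro v hv
        by_cases hvu : v = u
        · subst hvu
          refine ⟨w, ?_, hfw⟩
          rw [deleteEdge, SimpleGraph.deleteEdges_adj]
          refine ⟨hw, ?_⟩
          simp only [Set.mem_singleton_iff, Sym2.eq_iff]
          push_neg
          constructor
          · intro h; exact absurd h hw.ne
          · intro h; exact absurd h hxw.symm
        · obtain ⟨u', hadj, h2⟩ := hf.2.1 v hv
          refine ⟨u', ?_, h2⟩
          rw [deleteEdge, SimpleGraph.deleteEdges_adj]
          refine ⟨hadj, ?_⟩
          simp only [Set.mem_singleton_iff, Sym2.eq_iff]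
          push_neg
          constructor
          · intro h; exfalso; rw [h] at h2; rw [hu] at h2; omega
          · intro _ h; exact hvu h
      · intro v hv
        obtain ⟨u', hadj, h2⟩ := hf.2.2 v hv
        refine ⟨u', ?_, h2⟩
        rw [deleteEdge, SimpleGraph.deleteEdges_adj]
        refine ⟨hadj, ?_⟩
        simp only [Set.mem_singleton_iff, Sym2.eq_iff]
        push_neg
        constructor
        · intro h; exfalso; rw [h, hu] at h2; omega
        · intro _ h; rw [h, hu] at hv; omega
    rcases hcrit u x hux with h | h | h
    · exact hdeg h
    · exact hdeg1 u x hux hu h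
    · have := hle (deleteEdge G u x) f htrdf
      omega
  refine ⟨key, ?_⟩
  by_cases hz : ∃ u, f u = 0
  · obtain ⟨u, hu⟩ := hz
    exact ⟨u, key u hu⟩
  · push_neg at hz
    by_contra hno
    push_neg at hno
    have hdeg2 : ∀ v : V, 1 < degreeN G v := by
      intro v
      obtain ⟨y, hy⟩ := hiso v
      have hpos : 0 < degreeN G v :=
        (Set.ncard_pos (Set.toFinite _)).mpr ⟨y, hy.symm⟩
      have := hno v
      unfold degreeN at *; omega
    obtain ⟨v0⟩ := hconn.nonempty
    obtain ⟨u0, hu0⟩ := hiso v0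
    rcases hcrit u0 v0 hu0 with h | h | h
    · exact hno u0 h
    · exact hno v0 h
    · -- constant-1 function is a TRDF on G - u0v0
      have htrdf : IsTRDF (deleteEdge G u0 v0) (fun _ => 1) := by
        refine ⟨fun _ => one_le_two, fun v hv => by simp at hv, ?_⟩
        intro v _
        classical
        set z : V := if v = u0 then v0 else u0 with hz'
        obtain ⟨y, hy, hyz⟩ := Set.exists_ne_of_one_lt_ncard (hdeg2 v) z
        have hvy : G.Adj v y := hy
        refine ⟨y, ?_, one_pos⟩
        rw [deleteEdge, SimpleGraph.deleteEdges_adj]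
        refine ⟨hvy.symm, ?_⟩
        simp only [Set.mem_singleton_iff, Sym2.eq_iff]
        push_neg
        constructor
        · intro hyu0 hvv0
          apply hyz
          rw [hz', if_neg (by rw [hvv0]; exact hu0.ne')]
          exact hyu0
        · intro hyv0 hvu0
          apply hyz
          rw [hz', if_pos hvu0]
          exact hyv0
      have hsum : ∑ v : V, (fun _ => (1:ℕ)) v ≤ ∑ v, f v := by
        apply Finset.sum_le_sum
        intro i _
        exact Nat.one_le_iff_ne_zero.mpr (hz i)
      have h2 : gammaTR (deleteEdge G u0 v0) ≤ gammaTR G := by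
        calc gammaTR (deleteEdge G u0 v0) ≤ ∑ v : V, (fun _ => (1:ℕ)) v :=
              hle _ _ htrdf
          _ ≤ ∑ v, f v := hsum
          _ = gammaTR G := hmin
      omega
end

section
/- Every connected γ_tR-edge-removal-critical graph is a tree. -/
open SimpleGraph Finset

variable {V : Type*}

private lemma support_getElem_eq {G : SimpleGraph V} {u v : V} (p : G.Walk u v) :
    ∀ (i : ℕ) (h : i < p.support.length), p.support[i] = p.getVert i := by
  induction p with
  | nil =>
    intro i h
    simp only [Walk.support_nil, List.length_cons, List.length_nil] at h
    interval_cases i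
    simp [Walk.getVert_zero]
  | cons ha p ih =>
    intro i h
    cases i with
    | zero => simp [Walk.support_cons, Walk.getVert_zero]
    | succ n =>
      simp only [Walk.support_cons, List.length_cons] at h
      simpa [Walk.support_cons, Walk.getVert_cons_succ] using ih n (by omega)

private lemma zmodTwoNeZero {k : ℕ} (hk : 3 ≤ k) : (2 : ZMod k) ≠ 0 := by
  haveI : NeZero k := ⟨by omega⟩
  intro h
  have := congrArg ZMod.val h
  rw [show ((2:ZMod k)) = ((2:ℕ):ZMod k) by push_cast; ring,
    ZMod.val_cast_of_lt (by omega), ZMod.val_zero] at this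
  omega

private lemma keyA [Fintype V] {G : SimpleGraph V}
    (hcrit : ∀ u v : V, G.Adj u v →
      degreeN G u = 1 ∨ degreeN G v = 1 ∨ gammaTR G < gammaTR (deleteEdge G u v))
    {f : V → ℕ} (hf1 : ∀ v, f v ≤ 2) (hsum : ∑ v, f v = gammaTR G)
    {w : V → V} (hw : ∀ v, G.Adj (w v) v ∧ (f v = 0 → f (w v) = 2) ∧ (0 < f v → 0 < f (w v)))
    {a b : V} (hab : G.Adj a b) (h1 : w a ≠ b) (h2 : w b ≠ a) : False := by
  have hne : ∀ v : V, s(w v, v) ≠ s(a, b) := by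
    intro v h
    rw [Sym2.eq_iff] at h
    rcases h with ⟨h3, h4⟩ | ⟨h3, h4⟩
    · exact h2 (h4 ▸ h3)
    · exact h1 (h4 ▸ h3)
  have hdadj : ∀ v : V, (deleteEdge G a b).Adj (w v) v := by
    intro v
    rw [deleteEdge, SimpleGraph.deleteEdges_adj]
    exact ⟨(hw v).1, by simpa using hne v⟩
  have htr : IsTRDF (deleteEdge G a b) f :=
    ⟨hf1, fun v hv => ⟨w v, hdadj v, (hw v).2.1 hv⟩,
      fun v hv => ⟨w v, hdadj v, (hw v).2.2 hv⟩⟩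
  have hle : gammaTR (deleteEdge G a b) ≤ gammaTR G := hsum ▸ Nat.sInf_le ⟨f, htr, rfl⟩
  have hdeg : ∀ {p q : V}, G.Adj p q → w p ≠ q → degreeN G p ≠ 1 := by
    intro p q hpq hnepq h
    have h1' : q ∈ {u | G.Adj p u} := hpq
    have h2' : w p ∈ {u | G.Adj p u} := (hw p).1.symm
    have : 1 < Set.ncard {u | G.Adj p u} :=
      (Set.one_lt_ncard_iff (Set.toFinite _)).2 ⟨w p, q, h2', h1', hnepq⟩
    rw [degreeN] at h
    omega
  rcases hcrit a b hab with h | h | h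
  · exact hdeg hab h1 h
  · exact hdeg hab.symm h2 h
  · omega

private lemma dirCycle [Fintype V] {G : SimpleGraph V}
    (hcrit : ∀ u v : V, G.Adj u v →
      degreeN G u = 1 ∨ degreeN G v = 1 ∨ gammaTR G < gammaTR (deleteEdge G u v))
    {f : V → ℕ} (hf1 : ∀ v, f v ≤ 2) (hsum : ∑ v, f v = gammaTR G)
    {w : V → V} (hw : ∀ v, G.Adj (w v) v ∧ (f v = 0 → f (w v) = 2) ∧ (0 < f v → 0 < f (w v)))
    {k : ℕ} (hk : 3 ≤ k) {x : ZMod k → V} (hinj : Function.Injective x)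
    (hadj : ∀ i, G.Adj (x i) (x (i + 1))) (hdir : ∀ i, w (x i) = x (i + 1)) : False := by
  classical
  haveI : NeZero k := ⟨by omega⟩
  have h20 : (2 : ZMod k) ≠ 0 := zmodTwoNeZero hk
  have step : ∀ i, 0 < f (x (i+1)) := by
    intro i
    rcases Nat.eq_zero_or_pos (f (x i)) with h | h
    · have := (hw (x i)).2.1 h; rw [hdir i] at this; omega
    · have := (hw (x i)).2.2 h; rwa [hdir i] at this
  have pos : ∀ i, 0 < f (x i) := by
    have key : ∀ (n : ℕ) (i : ZMod k), 0 < f (x (i + 1 + n)) := by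
      intro n
      induction n with
      | zero => intro i; simpa using step i
      | succ n ih =>
        intro i
        have h1 := step (i + 1 + n)
        have he : (i + 1 + (n:ZMod k)) + 1 = i + 1 + ((n+1 : ℕ) : ZMod k) := by
          push_cast; ring
        rwa [he] at h1
    intro i
    have h1 := key (k-1) i
    have hc : ((k-1 : ℕ) : ZMod k) = -1 := by
      rw [Nat.cast_sub (by omega), ZMod.natCast_self, Nat.cast_one, zero_sub]
    rw [hc, show i + 1 + (-1 : ZMod k) = i by ring] at h1
    exact h1
  set w' := Function.update w (x 0) (x (-1)) with hw'def
  have hadj' : G.Adj (x (-1)) (x 0) := by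
    have := hadj (-1); rwa [neg_add_cancel] at this
  have hw' : ∀ v, G.Adj (w' v) v ∧ (f v = 0 → f (w' v) = 2) ∧ (0 < f v → 0 < f (w' v)) := by
    intro v
    by_cases hv : v = x 0
    · subst hv
      rw [hw'def]
      simp only [Function.update_self]
      exact ⟨hadj', fun h0 => absurd h0 (by have := pos 0; omega), fun _ => pos (-1)⟩
    · rw [hw'def]
      simp only [Function.update_of_ne hv]
      exact hw v
  have h01 : G.Adj (x 0) (x 1) := by
    have := hadj 0; rwa [zero_add] at this
  refine keyA hcrit hf1 hsum hw' h01 ?_ ?_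
  · rw [hw'def, Function.update_self]
    intro h
    have h' := hinj h
    exact h20 (by linear_combination -h')
  · intro h
    have hne : x 1 ≠ x 0 := by
      intro h'
      have := hinj h'
      exact h20 (by linear_combination 2*this)
    rw [hw'def, Function.update_of_ne hne, hdir 1] at h
    have := hinj h
    exact h20 (by linear_combination this)

theorem stmt16 (G : SimpleGraph V) [Fintype V] (hconn : G.Connected)
    (hiso : NoIsolated G)
    (hcrit : ∀ u v : V, G.Adj u v →
      degreeN G u = 1 ∨ degreeN G v = 1 ∨ gammaTR G < gammaTR (deleteEdge G u v)) :
    G.IsTree := by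
  classical
  rw [isTree_iff]
  refine ⟨hconn, ?_⟩
  intro v0 c hc
  -- a minimum TRDF and a witness function
  have htr2 : IsTRDF G (fun _ => 2) := by
    refine ⟨fun v => le_rfl, fun v h => by simp at h, fun v _ => ?_⟩
    obtain ⟨u, hu⟩ := hiso v
    exact ⟨u, hu, by norm_num⟩
  have hne0 : {n | ∃ f : V → ℕ, IsTRDF G f ∧ ∑ v, f v = n}.Nonempty :=
    ⟨∑ _v : V, 2, fun _ => 2, htr2, rfl⟩
  obtain ⟨f, hf, hsum'⟩ := Nat.sInf_mem hne0
  have hsum : ∑ v, f v = gammaTR G := hsum'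
  clear hsum' hne0 htr2
  have hwit : ∀ v, ∃ u, G.Adj u v ∧ (f v = 0 → f u = 2) ∧ (0 < f v → 0 < f u) := by
    intro v
    by_cases h : f v = 0
    · obtain ⟨u, hu, h2⟩ := hf.2.1 v h
      have h3 : 0 < f u := by omega
      exact ⟨u, hu, fun _ => h2, fun _ => h3⟩
    · obtain ⟨u, hu, h2⟩ := hf.2.2 v (Nat.pos_of_ne_zero h)
      exact ⟨u, hu, fun h0 => absurd h0 h, fun _ => h2⟩
  choose w hw using hwit
  have hused : ∀ a b, G.Adj a b → w a = b ∨ w b = a := by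
    intro a b hab
    by_contra hcon
    push_neg at hcon
    exact keyA hcrit hf.1 hsum hw hab hcon.1 hcon.2
  -- set up the cycle as a function on ZMod k
  obtain ⟨k, hkdef⟩ : ∃ k, c.length = k := ⟨_, rfl⟩
  have hk : 3 ≤ k := hkdef ▸ hc.three_le_length
  haveI : NeZero k := ⟨by omega⟩
  have h20 : (2 : ZMod k) ≠ 0 := zmodTwoNeZero hk
  obtain ⟨x, hx⟩ : ∃ x : ZMod k → V, x = fun i => c.getVert (i.val + 1) := ⟨_, rfl⟩
  have hcast : ∀ i : ZMod k, ((i.val : ℕ) : ZMod k) = i := by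
    intro i; simp [ZMod.natCast_val, ZMod.cast_id]
  have hlen : c.support.length = k + 1 := by rw [Walk.length_support, hkdef]
  have htlen : c.support.tail.length = k := by rw [List.length_tail, hlen]; omega
  have hinj : Function.Injective x := by
    intro i j hij
    have hi := ZMod.val_lt i
    have hj := ZMod.val_lt j
    have e1 : c.support.tail[i.val]'(by omega) = x i := by
      simp only [hx]
      rw [List.getElem_tail, support_getElem_eq]
    have e2 : c.support.tail[j.val]'(by omega) = x j := by
      simp only [hx]
      rw [List.getElem_tail, support_getElem_eq]
    have hvij : i.val = j.val :=
      hc.support_nodup.getElem_inj_iff.mp (by rw [e1, e2]; exact hij)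
    rw [← hcast i, ← hcast j, hvij]
  have hadjx : ∀ i : ZMod k, G.Adj (x i) (x (i+1)) := by
    intro i
    have hi := ZMod.val_lt i
    by_cases h : i.val + 1 < k
    · have hval : (i + 1).val = i.val + 1 := by
        rw [show i + 1 = ((i.val + 1 : ℕ) : ZMod k) by rw [Nat.cast_add, hcast, Nat.cast_one]]
        exact ZMod.val_cast_of_lt h
      simp only [hx, hval]
      exact c.adj_getVert_succ (by omega)
    · have hival : i.val = k - 1 := by omega
      have h1 : i + 1 = 0 := by
        rw [← hcast i, hival, Nat.cast_sub (by omega : 1 ≤ k), Nat.cast_one,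
          ZMod.natCast_self]
        ring
      rw [h1]
      have hx0 : x 0 = c.getVert 1 := by simp [hx]
      have hxk : x i = c.getVert c.length := by
        simp only [hx, hival]
        congr 1
        omega
      have hadj01 := c.adj_getVert_succ (show 0 < c.length by omega)
      rw [c.getVert_zero] at hadj01
      rw [hx0, hxk, c.getVert_length]
      exact hadj01
  -- dichotomy: the cycle is directed one way or the other
  rcases Classical.em (∃ i : ZMod k, w (x i) = x (i+1)) with ⟨i0, hi0⟩ | hnone
  · have hstep : ∀ i : ZMod k, w (x (i+1)) = x (i+1+1) → w (x i) = x (i+1) := by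
      intro i h
      rcases hused (x i) (x (i+1)) (hadjx i) with h' | h'
      · exact h'
      · exfalso
        have := hinj (h'.symm.trans h)
        exact h20 (by linear_combination -this)
    have hall : ∀ n : ℕ, w (x (i0 - n)) = x (i0 - n + 1) := by
      intro n
      induction n with
      | zero => simpa using hi0
      | succ n ih =>
        apply hstep
        have he : i0 - ((n+1:ℕ) : ZMod k) + 1 = i0 - n := by push_cast; ring
        rw [he]
        exact ih
    have hdir : ∀ j, w (x j) = x (j+1) := by
      intro j
      have h1 := hall (i0 - j).val
      rw [show i0 - (((i0 - j).val : ℕ) : ZMod k) = j by rw [hcast]; ring] at h1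
      exact h1
    exact dirCycle hcrit hf.1 hsum hw hk hinj hadjx hdir
  · push_neg at hnone
    have hall : ∀ i : ZMod k, w (x i) = x (i - 1) := by
      intro i
      rcases hused (x (i-1)) (x (i-1+1)) (hadjx (i-1)) with h' | h'
      · exact absurd h' (hnone (i-1))
      · rw [show i - 1 + 1 = i by ring] at h'
        exact h'
    obtain ⟨y, hy⟩ : ∃ y : ZMod k → V, y = fun i => x (-i) := ⟨_, rfl⟩
    have hinjy : Function.Injective y := by
      intro i j h
      rw [hy] at h
      exact neg_injective (hinj h)
    have hadjy : ∀ i, G.Adj (y i) (y (i+1)) := by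
      intro i
      have h1 := (hadjx (-i-1)).symm
      rw [show -i-1+1 = -i by ring] at h1
      simp only [hy]
      rw [show -(i+1) = -i-1 by ring]
      exact h1
    have hdiry : ∀ i, w (y i) = y (i+1) := by
      intro i
      have h1 := hall (-i)
      simp only [hy]
      rw [show -(i+1) = -i-1 by ring]
      exact h1
    exact dirCycle hcrit hf.1 hsum hw hk hinjy hadjy hdiry
end

section
/- If G is a connected graph with diameter 2 and total Roman domination number k, then the minimum degree of G is at least ⌊k/2⌋. -/
open SimpleGraph Finset

variable {V : Type*}

theorem stmt18 (G : SimpleGraph V) [Fintype V] (hconn : G.Connected)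
    (hdiam : G.diam = 2) (k : ℕ) (hk : gammaTR G = k) :
    ∀ v : V, k / 2 ≤ degreeN G v := by
  intro v
  classical
  -- Nontrivial V
  have hnt : Nontrivial V := by
    by_contra h
    have : Subsingleton V := not_nontrivial_iff_subsingleton.mp h
    have : G.diam = 0 := diam_eq_zero.mpr (Or.inr this)
    omega
  have hetop : G.ediam ≠ ⊤ := ediam_ne_top_of_diam_ne_zero (by omega)
  -- v has a neighbor
  obtain ⟨w', hw'⟩ := exists_ne v
  have hreach := hconn v w'
  obtain ⟨p0, hp0⟩ := hreach.exists_walk_length_eq_dist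
  have hlp0 : 0 < p0.length := by
    rcases Nat.eq_zero_or_pos p0.length with h0 | h0
    · exfalso
      have h1 := p0.getVert_length
      have h2 := p0.getVert_zero
      rw [h0] at h1
      exact hw' (h1.symm.trans h2)
    · exact h0
  have hadj0 : G.Adj v (p0.getVert 1) := by
    have := p0.adj_getVert_succ hlp0
    simpa using this
  set f : V → ℕ := fun w => (if w = v then 1 else 0) + (if G.Adj v w then 2 else 0) with hf
  have hfval : ∀ w, G.Adj v w → f w = 2 := by
    intro w hw
    have hne : w ≠ v := fun h => G.irrefl (h ▸ hw)
    simp [hf, hne, hw]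
  have hfv : f v = 1 := by simp [hf, G.irrefl]
  have htrdf : IsTRDF G f := by
    refine ⟨?_, ?_, ?_⟩
    · intro w
      by_cases hw : w = v
      · subst hw; simp [hf, G.irrefl]
      · simp [hf, hw]; split <;> omega
    · intro w hw0
      have hwv : w ≠ v := by
        intro h; rw [h, hfv] at hw0; omega
      have hnadj : ¬ G.Adj v w := by
        intro h; rw [hfval w h] at hw0; omega
      have hdle : G.dist v w ≤ 2 := hdiam ▸ dist_le_diam hetop
      have hdne0 : G.dist v w ≠ 0 := by
        intro h; exact hwv ((hconn v w).dist_eq_zero_iff.mp h).symm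
      have hdne1 : G.dist v w ≠ 1 := by
        intro h; exact hnadj (dist_eq_one_iff_adj.mp h)
      have hd2 : G.dist v w = 2 := by omega
      obtain ⟨p, hp⟩ := (hconn v w).exists_walk_length_eq_dist
      rw [hd2] at hp
      refine ⟨p.getVert 1, ?_, ?_⟩
      · have h1 : G.Adj (p.getVert 1) (p.getVert 2) := p.adj_getVert_succ (by omega)
        have h2 : p.getVert 2 = w := by
          have := p.getVert_length; rw [hp] at this; exact this
        rwa [h2] at h1
      · have h0 : G.Adj (p.getVert 0) (p.getVert 1) := p.adj_getVert_succ (by omega)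
        rw [p.getVert_zero] at h0
        exact hfval _ h0
    · intro w hw0
      by_cases hw : w = v
      · subst hw
        exact ⟨p0.getVert 1, hadj0.symm, by rw [hfval _ hadj0]; omega⟩
      · have hadj : G.Adj v w := by
          by_contra h
          simp [hf, hw, h] at hw0
        exact ⟨v, hadj, by rw [hfv]; omega⟩
  -- the sum
  have hdeg : degreeN G v = (Finset.univ.filter (fun u => G.Adj v u)).card := by
    rw [degreeN]
    have : {u | G.Adj v u} = ↑(Finset.univ.filter (fun u => G.Adj v u)) := by
      ext u; simp
    rw [this, Set.ncard_coe_finset]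
  have hsum : ∑ w, f w = 2 * degreeN G v + 1 := by
    rw [hf]
    rw [Finset.sum_add_distrib, Finset.sum_ite_eq' Finset.univ v (fun _ => 1)]
    simp only [Finset.mem_univ, if_true]
    rw [Finset.sum_ite, Finset.sum_const, Finset.sum_const]
    rw [hdeg]
    ring
  have hle : gammaTR G ≤ 2 * degreeN G v + 1 :=
    Nat.sInf_le ⟨f, htrdf, hsum⟩
  omega
end

section
/- If G is a connected 6-γ_tR-edge-supercritical graph with diameter 2, then γ_t(G) = 3 and γ(G) = 3, and adding any non-edge decreases both γ_t and γ to 2 (i.e., G is 3-γ_t-edge-critical and 3-γ-edge-critical). -/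
open SimpleGraph Finset

variable {V : Type*}

-- helper lemmas
lemma myAddEdge_adj (G : SimpleGraph V) {u v : V} (x y : V) :
    (addEdge G u v).Adj x y → G.Adj x y ∨ (x = u ∧ y = v) ∨ (x = v ∧ y = u) := by
  simp only [addEdge, SimpleGraph.sup_adj, SimpleGraph.fromEdgeSet_adj, Set.mem_singleton_iff,
    Sym2.eq_iff]
  tauto

lemma myExistsAdj (G : SimpleGraph V) (hconn : G.Connected) [Nontrivial V] (v : V) :
    ∃ u, G.Adj u v := by
  obtain ⟨w, hw⟩ := exists_ne v
  obtain ⟨p⟩ := hconn v w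
  cases p with
  | nil => exact absurd rfl (Ne.symm hw)
  | cons h _ => exact ⟨_, h.symm⟩

lemma myTRDF_nonempty [Fintype V] (G : SimpleGraph V) (hni : NoIsolated G) :
    {n | ∃ f : V → ℕ, IsTRDF G f ∧ ∑ v, f v = n}.Nonempty :=
  ⟨_, (fun _ => 1), ⟨fun _ => one_le_two, fun v h => by simp at h,
    fun v _ => (hni v).imp fun u hu => ⟨hu, one_pos⟩⟩, rfl⟩

lemma myGammaTR_le [Fintype V] (G : SimpleGraph V) (f : V → ℕ) (hf : IsTRDF G f) :
    gammaTR G ≤ ∑ v, f v := Nat.sInf_le ⟨f, hf, rfl⟩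

lemma mySum_subset [Fintype V] (f : V → ℕ) (T : Finset V) (h : ∀ x, x ∉ T → f x = 0) :
    ∑ v, f v = ∑ v ∈ T, f v :=
  (Finset.sum_subset (Finset.subset_univ T) (fun x _ hx => h x hx)).symm

lemma myKey1 [Fintype V] (H : SimpleGraph V) (hni : NoIsolated H)
    (h4 : gammaTR H = 4) (hcard : 5 ≤ Fintype.card V) :
    ∃ S : Finset V, TotalDominating H S ∧ S.card = 2 := by
  classical
  have hmem : (4 : ℕ) ∈ {n | ∃ f : V → ℕ, IsTRDF H f ∧ ∑ v, f v = n} := by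
    rw [← h4]; exact Nat.sInf_mem (myTRDF_nonempty H hni)
  obtain ⟨f, ⟨hle2, h0, hpos⟩, hsum⟩ := hmem
  have ha : ∃ a, f a = 2 := by
    by_contra hno
    push_neg at hno
    have h1 : ∀ v, f v = 1 := by
      intro v
      rcases Nat.eq_zero_or_pos (f v) with h | h
      · obtain ⟨u, _, hu2⟩ := h0 v h
        exact absurd hu2 (hno u)
      · have := hle2 v; have := hno v; omega
    have hc : ∑ v, f v = Fintype.card V := by
      simp [h1, Finset.card_univ]
    omega
  obtain ⟨a, ha2⟩ := ha
  obtain ⟨p, hpa, hp⟩ := hpos a (by omega)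
  have hpane : p ≠ a := fun h => H.irrefl (h ▸ hpa)
  have hrest : ∑ v ∈ Finset.univ.erase a, f v = 2 := by
    have := Finset.sum_erase_add Finset.univ f (Finset.mem_univ a)
    omega
  refine ⟨{a, p}, ?_, ?_⟩
  · intro v
    rcases Nat.eq_zero_or_pos (f v) with hv | hv
    · obtain ⟨w, hwv, hw2⟩ := h0 v hv
      rcases eq_or_ne w a with rfl | hwa
      · exact ⟨w, by simp, hwv⟩
      rcases eq_or_ne w p with rfl | hwp
      · exact ⟨w, by simp, hwv⟩
      exfalso
      have hsub : ({w, p} : Finset V) ⊆ Finset.univ.erase a := by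
        intro x hx
        simp only [Finset.mem_insert, Finset.mem_singleton] at hx
        rcases hx with rfl | rfl <;> simp [hwa, hpane]
      have hsle := Finset.sum_le_sum_of_subset (f := f) hsub
      rw [Finset.sum_pair hwp] at hsle
      omega
    · rcases eq_or_ne v a with rfl | hva
      · exact ⟨p, by simp, hpa⟩
      rcases eq_or_ne v p with rfl | hvp
      · exact ⟨a, by simp, hpa.symm⟩
      obtain ⟨w, hwv, hw⟩ := hpos v hv
      rcases eq_or_ne w a with rfl | hwa
      · exact ⟨w, by simp, hwv⟩
      rcases eq_or_ne w p with rfl | hwp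
      · exact ⟨w, by simp, hwv⟩
      exfalso
      have hwvne : w ≠ v := fun h => H.irrefl (h ▸ hwv)
      have hsub : ({w, p, v} : Finset V) ⊆ Finset.univ.erase a := by
        intro x hx
        simp only [Finset.mem_insert, Finset.mem_singleton] at hx
        rcases hx with rfl | rfl | rfl <;> simp [hwa, hpane, hva]
      have hsle := Finset.sum_le_sum_of_subset (f := f) hsub
      rw [Finset.sum_insert (by simp [hwp, hwvne]), Finset.sum_pair (Ne.symm hvp)] at hsle
      omega
  · exact Finset.card_pair (Ne.symm hpane)

lemma myGammaTR_le_three [Fintype V] (H : SimpleGraph V) (a b : V) (hab : H.Adj a b)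
    (hdom : ∀ v, v ≠ a → H.Adj a v) : gammaTR H ≤ 3 := by
  classical
  have hba : b ≠ a := fun h => H.irrefl (h ▸ hab)
  set f : V → ℕ := fun v => if v = a then 2 else if v = b then 1 else 0 with hfdef
  have hftr : IsTRDF H f := by
    refine ⟨?_, ?_, ?_⟩
    · intro v; simp only [f]; split_ifs <;> omega
    · intro v hv
      have hva : v ≠ a := by rintro rfl; simp [f] at hv
      exact ⟨a, hdom v hva, by simp [f]⟩
    · intro v hv
      by_cases h1 : v = a
      · subst h1; exact ⟨b, hab.symm, by simp [f, hba]⟩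
      · have h2 : v = b := by by_contra h2; simp [f, h1, h2] at hv
        subst h2; exact ⟨a, hab, by simp [f]⟩
  have hsle : ∑ v, f v ≤ 3 := by
    rw [mySum_subset f {a, b} (by intro x hx; simp only [Finset.mem_insert,
      Finset.mem_singleton, not_or] at hx; simp [f, hx.1, hx.2])]
    rw [Finset.sum_pair (Ne.symm hba)]
    simp [f, hba]
  exact le_trans (myGammaTR_le H f hftr) hsle

lemma myGammaTR_le_four [Fintype V] (H : SimpleGraph V) (a b : V) (hab : H.Adj a b)
    (hdom : ∀ v, v ≠ a → v ≠ b → H.Adj a v ∨ H.Adj b v) : gammaTR H ≤ 4 := by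
  classical
  have hba : b ≠ a := fun h => H.irrefl (h ▸ hab)
  set f : V → ℕ := fun v => if v = a then 2 else if v = b then 2 else 0 with hfdef
  have hftr : IsTRDF H f := by
    refine ⟨?_, ?_, ?_⟩
    · intro v; by_cases h1 : v = a <;> by_cases h2 : v = b <;> simp [f, h1, h2]
    · intro v hv
      have hva : v ≠ a := by rintro rfl; simp [f] at hv
      have hvb : v ≠ b := by rintro rfl; simp [f, hba] at hv
      rcases hdom v hva hvb with h | h
      · exact ⟨a, h, by simp [f]⟩
      · exact ⟨b, h, by simp [f, hba]⟩
    · intro v hv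
      by_cases h1 : v = a
      · subst h1; exact ⟨b, hab.symm, by simp [f, hba]⟩
      · have h2 : v = b := by by_contra h2; simp [f, h1, h2] at hv
        subst h2; exact ⟨a, hab, by simp [f]⟩
  have hsle : ∑ v, f v ≤ 4 := by
    rw [mySum_subset f {a, b} (by intro x hx; simp only [Finset.mem_insert,
      Finset.mem_singleton, not_or] at hx; simp [f, hx.1, hx.2])]
    rw [Finset.sum_pair (Ne.symm hba)]
    simp [f, hba]
  exact le_trans (myGammaTR_le H f hftr) hsle

lemma myGammaTR_le_five [Fintype V] (H : SimpleGraph V) (a b c : V) (hca : H.Adj c a)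
    (hcb : H.Adj c b) (hab : a ≠ b)
    (hdom : ∀ v, v ≠ a → v ≠ b → H.Adj a v ∨ H.Adj b v) : gammaTR H ≤ 5 := by
  classical
  have hcane : c ≠ a := hca.ne
  have hcbne : c ≠ b := hcb.ne
  set f : V → ℕ := fun v => if v = a then 2 else if v = b then 2 else if v = c then 1 else 0
    with hfdef
  have hftr : IsTRDF H f := by
    refine ⟨?_, ?_, ?_⟩
    · intro v; simp only [f]; split_ifs <;> omega
    · intro v hv
      have hva : v ≠ a := by rintro rfl; simp [f] at hv
      have hvb : v ≠ b := by rintro rfl; simp [f, hab] at hv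
      rcases hdom v hva hvb with h | h
      · exact ⟨a, h, by simp [f]⟩
      · exact ⟨b, h, by simp [f, Ne.symm hab]⟩
    · intro v hv
      by_cases h1 : v = a
      · subst h1; exact ⟨c, hca, by simp [f, hcane, hcbne]⟩
      by_cases h2 : v = b
      · subst h2; exact ⟨c, hcb, by simp [f, hcane, hcbne]⟩
      have h3 : v = c := by by_contra h3; simp [f, h1, h2, h3] at hv
      subst h3; exact ⟨a, hca.symm, by simp [f]⟩
  have hsle : ∑ v, f v ≤ 5 := by
    rw [mySum_subset f {a, b, c} (by intro x hx; simp only [Finset.mem_insert,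
      Finset.mem_singleton, not_or] at hx; simp [f, hx.1, hx.2.1, hx.2.2])]
    rw [Finset.sum_insert (by simp [hab, Ne.symm hcane]),
      Finset.sum_pair (Ne.symm hcbne)]
    simp [f, Ne.symm hab, hcane, hcbne]
  exact le_trans (myGammaTR_le H f hftr) hsle

lemma myTDS_two_le [Nonempty V] {H : SimpleGraph V} {S : Finset V}
    (hS : TotalDominating H S) : 2 ≤ S.card := by
  obtain ⟨u, hu, _⟩ := hS (Classical.arbitrary V)
  by_contra hlt
  push_neg at hlt
  have h1 : S.card = 1 := by
    have : 0 < S.card := Finset.card_pos.mpr ⟨u, hu⟩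
    omega
  obtain ⟨w, rfl⟩ := Finset.card_eq_one.mp h1
  obtain ⟨z, hz, hzw⟩ := hS w
  rw [Finset.mem_singleton] at hz
  subst hz
  exact H.irrefl hzw

lemma myTDS_set_nonempty [Fintype V] {H : SimpleGraph V} (hni : NoIsolated H) :
    {n | ∃ S : Finset V, TotalDominating H S ∧ S.card = n}.Nonempty :=
  ⟨_, Finset.univ, fun v => (hni v).imp fun u hu => ⟨Finset.mem_univ u, hu⟩, rfl⟩

lemma myDom_set_nonempty [Fintype V] {H : SimpleGraph V} :
    {n | ∃ S : Finset V, Dominating H S ∧ S.card = n}.Nonempty :=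
  ⟨_, Finset.univ, fun v hv => absurd (Finset.mem_univ v) hv, rfl⟩

lemma myGammaT_eq_two [Fintype V] [Nonempty V] {H : SimpleGraph V} (hni : NoIsolated H)
    {S : Finset V} (hS : TotalDominating H S) (h2 : S.card = 2) : gammaT H = 2 := by
  have hub : gammaT H ≤ 2 := h2 ▸ Nat.sInf_le ⟨S, hS, rfl⟩
  have hmem : gammaT H ∈ {n | ∃ S : Finset V, TotalDominating H S ∧ S.card = n} :=
    Nat.sInf_mem (myTDS_set_nonempty hni)
  obtain ⟨S', hS', hc⟩ := hmem
  have := myTDS_two_le hS'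
  omega

lemma myCommon {G : SimpleGraph V} (hconn : G.Connected) (hdiam : G.diam = 2) {u v : V}
    (huv : u ≠ v) (hnadj : ¬G.Adj u v) : ∃ x, G.Adj x u ∧ G.Adj x v := by
  have hT : G.ediam ≠ ⊤ := fun h => by simp [SimpleGraph.diam, h] at hdiam
  have hle : G.dist u v ≤ 2 := hdiam ▸ SimpleGraph.dist_le_diam hT
  have h0 : G.dist u v ≠ 0 := fun h => huv (hconn.dist_eq_zero_iff.mp h)
  have h1 : G.dist u v ≠ 1 := fun h => hnadj (SimpleGraph.dist_eq_one_iff_adj.mp h)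
  have h2 : G.dist u v = 2 := by omega
  obtain ⟨p, hp⟩ := hconn.exists_walk_length_eq_dist u v
  rw [h2] at hp
  cases p with
  | nil => simp at hp
  | cons h q =>
    cases q with
    | nil => simp at hp
    | cons h' r =>
      cases r with
      | nil => exact ⟨_, h.symm, h'⟩
      | cons h'' s => simp [SimpleGraph.Walk.length_cons] at hp

lemma myDom_small [Fintype V] [Nonempty V] {H : SimpleGraph V} (hni : NoIsolated H)
    {D : Finset V} (hD : Dominating H D) (h1 : D.card ≤ 1) : gammaTR H ≤ 3 := by
  rcases Nat.eq_zero_or_pos D.card with h0 | hpos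
  · exfalso
    have hD0 : D = ∅ := Finset.card_eq_zero.mp h0
    subst hD0
    obtain ⟨z, hz, _⟩ := hD (Classical.arbitrary V) (Finset.notMem_empty _)
    exact absurd hz (Finset.notMem_empty z)
  · have hc1 : D.card = 1 := by omega
    obtain ⟨a, rfl⟩ := Finset.card_eq_one.mp hc1
    obtain ⟨b, hba⟩ := hni a
    have hdom : ∀ v, v ≠ a → H.Adj a v := by
      intro v hv
      obtain ⟨z, hz, hzv⟩ := hD v (by simp [hv])
      rw [Finset.mem_singleton] at hz
      exact hz ▸ hzv
    exact myGammaTR_le_three H a b hba.symm hdom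

theorem stmt19 (G : SimpleGraph V) [Fintype V] (hconn : G.Connected)
    (hdiam : G.diam = 2) (h6 : gammaTR G = 6) (hne : ∃ u v : V, u ≠ v ∧ ¬G.Adj u v)
    (hsuper : ∀ u v : V, u ≠ v → ¬G.Adj u v → gammaTR (addEdge G u v) = 4) :
    gammaT G = 3 ∧ gamma G = 3 ∧
      ∀ u v : V, u ≠ v → ¬G.Adj u v →
        gammaT (addEdge G u v) = 2 ∧ gamma (addEdge G u v) = 2 := by
  classical
  obtain ⟨u₀, v₀, hne0, hnadj0⟩ := hne
  haveI : Nontrivial V := ⟨u₀, v₀, hne0⟩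
  haveI : Nonempty V := ⟨u₀⟩
  have hniG : NoIsolated G := fun v => myExistsAdj G hconn v
  have hcard : 6 ≤ Fintype.card V := by
    have h := myGammaTR_le G (fun _ => 1) ⟨fun _ => one_le_two, fun v h => by simp at h,
      fun v _ => (hniG v).imp fun u hu => ⟨hu, one_pos⟩⟩
    simp only [Finset.sum_const, Finset.card_univ, smul_eq_mul, mul_one] at h
    omega
  -- γ_t(G) ≥ 3
  have hgtG_ge : 3 ≤ gammaT G := by
    by_contra hlt
    push_neg at hlt
    have hmem : gammaT G ∈ {n | ∃ S : Finset V, TotalDominating G S ∧ S.card = n} :=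
      Nat.sInf_mem (myTDS_set_nonempty hniG)
    obtain ⟨S, hS, hc⟩ := hmem
    have h2le := myTDS_two_le hS
    have hc2 : S.card = 2 := by omega
    obtain ⟨a, b, hab, rfl⟩ := Finset.card_eq_two.mp hc2
    obtain ⟨z, hz, hza⟩ := hS a
    simp only [Finset.mem_insert, Finset.mem_singleton] at hz
    have hba : G.Adj b a := by
      rcases hz with rfl | rfl
      · exact absurd hza (G.irrefl)
      · exact hza
    have hdom : ∀ v, v ≠ b → v ≠ a → G.Adj b v ∨ G.Adj a v := by
      intro v _ _
      obtain ⟨z, hz, hzv⟩ := hS v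
      simp only [Finset.mem_insert, Finset.mem_singleton] at hz
      rcases hz with rfl | rfl
      · exact Or.inr hzv
      · exact Or.inl hzv
    have h4 := myGammaTR_le_four G b a hba hdom
    omega
  -- γ(G) ≥ 3
  have hgG_ge : 3 ≤ gamma G := by
    by_contra hlt
    push_neg at hlt
    have hmem : gamma G ∈ {n | ∃ S : Finset V, Dominating G S ∧ S.card = n} :=
      Nat.sInf_mem myDom_set_nonempty
    obtain ⟨D, hD, hc⟩ := hmem
    rcases Nat.lt_or_ge D.card 2 with hsmall | hbig
    · have := myDom_small hniG hD (by omega)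
      omega
    · have hc2 : D.card = 2 := by omega
      obtain ⟨a, b, habne, rfl⟩ := Finset.card_eq_two.mp hc2
      have hdom : ∀ v, v ≠ a → v ≠ b → G.Adj a v ∨ G.Adj b v := by
        intro v hva hvb
        obtain ⟨z, hz, hzv⟩ := hD v (by simp [hva, hvb])
        simp only [Finset.mem_insert, Finset.mem_singleton] at hz
        rcases hz with rfl | rfl
        · exact Or.inl hzv
        · exact Or.inr hzv
      by_cases hab : G.Adj a b
      · have h4 := myGammaTR_le_four G a b hab hdom
        omega
      · obtain ⟨c, hca, hcb⟩ := myCommon hconn hdiam habne hab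
        have h5 := myGammaTR_le_five G a b c hca hcb habne hdom
        omega
  -- TDS of size ≤ 3 for G
  have hniH0 : NoIsolated (addEdge G u₀ v₀) := fun w =>
    (hniG w).imp fun x hx => (le_sup_left : G ≤ addEdge G u₀ v₀) hx
  obtain ⟨S, hSt, hS2⟩ := myKey1 (addEdge G u₀ v₀) hniH0 (hsuper u₀ v₀ hne0 hnadj0) (by omega)
  obtain ⟨x, hxu, hxv⟩ := myCommon hconn hdiam hne0 hnadj0
  have hTds : TotalDominating G (insert x S) := by
    intro w
    obtain ⟨s, hs, hadj⟩ := hSt w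
    rcases myAddEdge_adj G s w hadj with h | ⟨rfl, rfl⟩ | ⟨rfl, rfl⟩
    · exact ⟨s, Finset.mem_insert_of_mem hs, h⟩
    · exact ⟨x, Finset.mem_insert_self x S, hxv⟩
    · exact ⟨x, Finset.mem_insert_self x S, hxu⟩
  have hTcard : (insert x S).card ≤ 3 := le_trans (Finset.card_insert_le x S) (by omega)
  have hgtG_le : gammaT G ≤ 3 :=
    le_trans (Nat.sInf_le ⟨insert x S, hTds, rfl⟩) hTcard
  have hgG_le : gamma G ≤ 3 :=
    le_trans (Nat.sInf_le ⟨insert x S, fun v _ => hTds v, rfl⟩) hTcard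
  refine ⟨le_antisymm hgtG_le hgtG_ge, le_antisymm hgG_le hgG_ge, ?_⟩
  intro u v huv hnadj
  have hniH : NoIsolated (addEdge G u v) := fun w =>
    (hniG w).imp fun y hy => (le_sup_left : G ≤ addEdge G u v) hy
  obtain ⟨S', hSt', hS2'⟩ := myKey1 (addEdge G u v) hniH (hsuper u v huv hnadj) (by omega)
  have hgt2 : gammaT (addEdge G u v) = 2 := myGammaT_eq_two hniH hSt' hS2'
  have hg_le : gamma (addEdge G u v) ≤ 2 :=
    hS2' ▸ Nat.sInf_le ⟨S', fun w _ => hSt' w, rfl⟩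
  have hg_ge : 2 ≤ gamma (addEdge G u v) := by
    by_contra hlt
    push_neg at hlt
    have hmem : gamma (addEdge G u v) ∈
        {n | ∃ S : Finset V, Dominating (addEdge G u v) S ∧ S.card = n} :=
      Nat.sInf_mem myDom_set_nonempty
    obtain ⟨D, hD, hc⟩ := hmem
    have h3 := myDom_small hniH hD (by omega)
    have h4 := hsuper u v huv hnadj
    omega
  exact ⟨hgt2, le_antisymm hg_le hg_ge⟩
end
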